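/- arXiv:1611.01210 — 6 statements merged into one kernel-verified Lean document; each statement's English description precedes it below -/
import Mathlib

section
/- Let G=(V,A) be a symmetric directed graph (if (a,b) ∈ A then (b,a) ∈ A) with a weight function w on the arcs that is symmetric (w(a,b) = w(b,a) for every arc (a,b)) and positive, and let a, b, c be three vertices of G. If P_{a,b} is a minimum-weight directed path from a to b and P_{b,c} is a minimum-weight directed path from b to c, then P_{a,b} and P_{b,c} have no arc in common. -/
/-- `IsDiPath A a b p` asserts that the list of vertices `p` is a simple directed
path from `a` to `b` in the directed graph with arc relation `A`. -/
def IsDiPath {V : Type*} (A : V → V → Prop) (a b : V) (p : List V) : Prop :=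
  p.head? = some a ∧ p.getLast? = some b ∧ List.Chain' A p ∧ p.Nodup

/-- The arcs traversed by a path: the list of consecutive pairs of vertices. -/
def pathArcs {V : Type*} (p : List V) : List (V × V) :=
  p.zip p.tail

/-- The total weight of a path: the sum of the weights of its arcs. -/
def pathWeight {V : Type*} (w : V → V → ℝ) (p : List V) : ℝ :=
  ((p.zip p.tail).map fun e => w e.1 e.2).sum

/-- `p` is a shortest (minimum total weight) directed path from `a` to `b`. -/
def IsShortestDiPath {V : Type*} (A : V → V → Prop) (w : V → V → ℝ) (a b : V)
    (p : List V) : Prop :=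
  IsDiPath A a b p ∧ ∀ q, IsDiPath A a b q → pathWeight w p ≤ pathWeight w q

/-!
If an arc `(x, y)` lay on both paths, then going from `a` to `x` along `P_ab` and back from `x`
to `b` along `P_bc` reversed, and from `b` to `y` along `P_ab` reversed and on to `c` along
`P_bc`, gives two walks of total weight `w(P_ab) + w(P_bc) - 2 w(x, y)`. Cutting the closed
subwalks out of a walk does not increase its weight, so each walk is at least as heavy as a
shortest path between its ends; adding up contradicts `w(x, y) > 0`.
-/

def IsDiWalk {V : Type*} (A : V → V → Prop) (a b : V) (p : List V) : Prop :=
  p.head? = some a ∧ p.getLast? = some b ∧ p.IsChain A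

section Walks

variable {V : Type*} {A : V → V → Prop} (w : V → V → ℝ)

theorem IsDiPath.isDiWalk {a b : V} {p : List V} (h : IsDiPath A a b p) : IsDiWalk A a b p :=
  ⟨h.1, h.2.1, h.2.2.1⟩

theorem pathWeight_cons_cons (x y : V) (p : List V) :
    pathWeight w (x :: y :: p) = w x y + pathWeight w (y :: p) := by
  simp [pathWeight]

theorem pathWeight_append_cons (l : List V) (x : V) (r : List V) :
    pathWeight w (l ++ x :: r) = pathWeight w (l ++ [x]) + pathWeight w (x :: r) := by
  induction l with
  | nil => simp [pathWeight]
  | cons u l ih =>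
    cases l with
    | nil => simp [pathWeight]
    | cons v l => simp only [List.cons_append, pathWeight_cons_cons] at ih ⊢; linarith

theorem pathWeight_nonneg (hw : ∀ x y, A x y → 0 ≤ w x y) {p : List V} (hp : p.IsChain A) :
    0 ≤ pathWeight w p := by
  induction hp with
  | nil | singleton => simp [pathWeight]
  | cons_cons hxy _ ih => rw [pathWeight_cons_cons]; linarith [hw _ _ hxy]

theorem pathWeight_reverse (hwsym : ∀ x y, A x y → w x y = w y x) {p : List V}
    (hp : p.IsChain A) : pathWeight w p.reverse = pathWeight w p := by
  induction hp with
  | nil | singleton => rfl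
  | @cons_cons x y l hxy _ ih =>
    rw [show (x :: y :: l).reverse = l.reverse ++ y :: [x] by simp, pathWeight_append_cons,
      show l.reverse ++ [y] = (y :: l).reverse by simp, ih, pathWeight_cons_cons,
      pathWeight_cons_cons, hwsym x y hxy]
    simp [pathWeight, add_comm]

theorem exists_eq_append_cons_cons_of_mem_pathArcs {p : List V} {x y : V}
    (h : (x, y) ∈ pathArcs p) : ∃ l r, p = l ++ x :: y :: r := by
  induction p with
  | nil => simp [pathArcs] at h
  | cons u p ih =>
    cases p with
    | nil => simp [pathArcs] at h
    | cons v p =>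
      rcases (by simpa [pathArcs] using h : (x = u ∧ y = v) ∨ (x, y) ∈ pathArcs (v :: p))
        with ⟨rfl, rfl⟩ | h
      · exact ⟨[], p, rfl⟩
      · obtain ⟨l, r, hp⟩ := ih h
        exact ⟨u :: l, r, by simp [hp]⟩

theorem exists_eq_append_cons_append_cons_of_not_nodup {p : List V} (h : ¬p.Nodup) :
    ∃ l m r x, p = l ++ x :: (m ++ x :: r) := by
  induction p with
  | nil => simp at h
  | cons u p ih =>
    by_cases hu : u ∈ p
    · obtain ⟨m, r, hp⟩ := List.append_of_mem hu
      exact ⟨[], m, r, u, by simp [hp]⟩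
    · obtain ⟨l, m, r, x, hp⟩ := ih (by simpa [hu] using h)
      exact ⟨u :: l, m, r, x, by simp [hp]⟩

theorem isDiWalk_append_cons_iff {a b x : V} {l r : List V} :
    IsDiWalk A a b (l ++ x :: r) ↔ IsDiWalk A a x (l ++ [x]) ∧ IsDiWalk A x b (x :: r) := by
  have hhead : (l ++ x :: r).head? = (l ++ [x]).head? := by cases l <;> rfl
  have hlast : (l ++ x :: r).getLast? = (x :: r).getLast? :=
    List.getLast?_append_of_ne_nil _ (List.cons_ne_nil x r)
  rw [IsDiWalk, IsDiWalk, IsDiWalk, List.isChain_split, hhead, hlast, List.getLast?_concat,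
    List.head?_cons]
  tauto

theorem IsDiWalk.reverse (hsym : ∀ x y, A x y → A y x) {a b : V} {p : List V}
    (hp : IsDiWalk A a b p) : IsDiWalk A b a p.reverse :=
  ⟨by rw [List.head?_reverse, hp.2.1], by rw [List.getLast?_reverse, hp.1],
    List.isChain_reverse.2 (hp.2.2.imp fun x y => hsym x y)⟩

theorem IsDiWalk.exists_pathWeight_eq_add {a b c : V} {p q : List V} (hp : IsDiWalk A a b p)
    (hq : IsDiWalk A b c q) :
    ∃ r, IsDiWalk A a c r ∧ pathWeight w r = pathWeight w p + pathWeight w q := by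
  obtain ⟨l, rfl⟩ := List.getLast?_eq_some_iff.1 hp.2.1
  obtain ⟨t, rfl⟩ := List.head?_eq_some_iff.1 hq.1
  exact ⟨l ++ b :: t, isDiWalk_append_cons_iff.2 ⟨hp, hq⟩, pathWeight_append_cons w l b t⟩

theorem IsDiWalk.exists_split_of_mem_pathArcs {a b x y : V} {p : List V}
    (hp : IsDiWalk A a b p) (hxy : (x, y) ∈ pathArcs p) :
    ∃ p₁ p₂, IsDiWalk A a x p₁ ∧ IsDiWalk A y b p₂ ∧ A x y ∧
      pathWeight w p = pathWeight w p₁ + w x y + pathWeight w p₂ := by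
  obtain ⟨l, r, rfl⟩ := exists_eq_append_cons_cons_of_mem_pathArcs hxy
  obtain ⟨hp₁, hp₂⟩ := isDiWalk_append_cons_iff.1 hp
  refine ⟨l ++ [x], y :: r, hp₁, ⟨rfl, hp₂.2.1, hp₂.2.2.tail⟩, hp₂.2.2.rel, ?_⟩
  rw [pathWeight_append_cons, pathWeight_cons_cons, add_assoc]

theorem IsDiWalk.exists_isDiPath_pathWeight_le (hw : ∀ x y, A x y → 0 ≤ w x y) {a b : V}
    {p : List V} (hp : IsDiWalk A a b p) :
    ∃ q, IsDiPath A a b q ∧ pathWeight w q ≤ pathWeight w p := by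
  induction hn : p.length using Nat.strong_induction_on generalizing p with
  | _ n ih =>
    by_cases hnd : p.Nodup
    · exact ⟨p, ⟨hp.1, hp.2.1, hp.2.2, hnd⟩, le_rfl⟩
    obtain ⟨l, m, r, x, rfl⟩ := exists_eq_append_cons_append_cons_of_not_nodup hnd
    obtain ⟨hl, hmr⟩ := isDiWalk_append_cons_iff.1 hp
    obtain ⟨hcycle, hr⟩ := (isDiWalk_append_cons_iff (l := x :: m)).1 hmr
    obtain ⟨q, hq, hqw⟩ := ih (l ++ x :: r).length (by simp [← hn])
      (isDiWalk_append_cons_iff.2 ⟨hl, hr⟩) rfl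
    refine ⟨q, hq, hqw.trans ?_⟩
    have hsplit : pathWeight w (l ++ x :: (m ++ x :: r)) =
        pathWeight w (l ++ [x]) + pathWeight w (x :: m ++ [x]) + pathWeight w (x :: r) := by
      rw [pathWeight_append_cons w l, ← List.cons_append, pathWeight_append_cons w (x :: m),
        add_assoc]
    rw [pathWeight_append_cons w l x r, hsplit]
    linarith [pathWeight_nonneg w hw hcycle.2.2]

theorem IsShortestDiPath.pathWeight_le_of_isDiWalk (hw : ∀ x y, A x y → 0 ≤ w x y) {a b : V}
    {p q : List V} (hp : IsShortestDiPath A w a b p) (hq : IsDiWalk A a b q) :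
    pathWeight w p ≤ pathWeight w q :=
  let ⟨_, hq', hle⟩ := hq.exists_isDiPath_pathWeight_le w hw
  (hp.2 _ hq').trans hle

end Walks

/-- In a symmetric directed graph with symmetric positive arc weights,
a shortest path from `a` to `b` and a shortest path from `b` to `c` share no arc. -/
theorem consecutive_shortest_paths_arc_disjoint
    {V : Type*} (A : V → V → Prop) (w : V → V → ℝ)
    (hsym : ∀ x y, A x y → A y x)
    (hwsym : ∀ x y, A x y → w x y = w y x)
    (hwpos : ∀ x y, A x y → 0 < w x y)
    (a b c : V) (Pab Pbc : List V)
    (hab : IsShortestDiPath A w a b Pab)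
    (hbc : IsShortestDiPath A w b c Pbc) :
    ∀ e ∈ pathArcs Pab, e ∉ pathArcs Pbc := by
  rintro ⟨x, y⟩ hab_xy hbc_xy
  have hw : ∀ x y, A x y → 0 ≤ w x y := fun x y h => (hwpos x y h).le
  obtain ⟨p₁, p₂, hp₁, hp₂, hxy, hab_w⟩ := hab.1.isDiWalk.exists_split_of_mem_pathArcs w hab_xy
  obtain ⟨q₁, q₂, hq₁, hq₂, -, hbc_w⟩ := hbc.1.isDiWalk.exists_split_of_mem_pathArcs w hbc_xy
  obtain ⟨r₁, hr₁, hr₁_w⟩ := hp₁.exists_pathWeight_eq_add w (hq₁.reverse hsym)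
  obtain ⟨r₂, hr₂, hr₂_w⟩ := (hp₂.reverse hsym).exists_pathWeight_eq_add w hq₂
  rw [pathWeight_reverse w hwsym hq₁.2.2] at hr₁_w
  rw [pathWeight_reverse w hwsym hp₂.2.2] at hr₂_w
  have h₁ := hab.pathWeight_le_of_isDiWalk w hw hr₁
  have h₂ := hbc.pathWeight_le_of_isDiWalk w hw hr₂
  linarith [hwpos x y hxy]
end

section
/- Let T be a tree, let G be the corresponding symmetric directed graph with positive arc weights, and let C ⊆ F ⊆ V with C nonempty. Let T* be the tree obtained from T by repeatedly deleting leaf vertices that are not customers, and let F* be the set of leaves of T*. Then F* ⊆ C ⊆ F, F* is a pathwise-disjoint cover for C, and every pathwise-disjoint cover for C has size at least |F*|; that is, F* is a minimum-cardinality pathwise-disjoint cover for C. -/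
/-- The pair `{f₁, f₂}` covers `c` in a pathwise-disjoint fashion: there are shortest
paths from `c` to `f₁` and from `c` to `f₂` with no common vertex except `c`. -/
def CoversPathwise {V : Type*} (A : V → V → Prop) (w : V → V → ℝ) (c f₁ f₂ : V) : Prop :=
  ∃ p₁ p₂, IsShortestDiPath A w c f₁ p₁ ∧ IsShortestDiPath A w c f₂ p₂ ∧
    ∀ v ∈ p₁, v ∈ p₂ → v = c

/-- The pair `{f₁, f₂}` covers `c` in a setwise-disjoint fashion: no shortest path
from `c` to `f₁` shares a vertex other than `c` with any shortest path from `c` to `f₂`. -/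
def CoversSetwise {V : Type*} (A : V → V → Prop) (w : V → V → ℝ) (c f₁ f₂ : V) : Prop :=
  ∀ p₁ p₂, IsShortestDiPath A w c f₁ p₁ → IsShortestDiPath A w c f₂ p₂ →
    ∀ v ∈ p₁, v ∈ p₂ → v = c

/-- `F'` is a pathwise-disjoint cover for the customers `C` (facilities drawn from `F`). -/
def IsPathwiseCover {V : Type*} (A : V → V → Prop) (w : V → V → ℝ) (C F F' : Set V) : Prop :=
  F' ⊆ F ∧ ∀ c ∈ C, c ∉ F' → ∃ f₁ ∈ F', ∃ f₂ ∈ F', f₁ ≠ f₂ ∧ f₁ ≠ c ∧ f₂ ≠ c ∧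
    CoversPathwise A w c f₁ f₂

/-- `F'` is a setwise-disjoint cover for the customers `C` (facilities drawn from `F`). -/
def IsSetwiseCover {V : Type*} (A : V → V → Prop) (w : V → V → ℝ) (C F F' : Set V) : Prop :=
  F' ⊆ F ∧ ∀ c ∈ C, c ∉ F' → ∃ f₁ ∈ F', ∃ f₂ ∈ F', f₁ ≠ f₂ ∧ f₁ ≠ c ∧ f₂ ≠ c ∧
    CoversSetwise A w c f₁ f₂

/-- One step of the pruning procedure: delete a leaf vertex (a vertex with exactly one
neighbour in the current vertex set) that is not a customer. -/
inductive LeafPruneStep {V : Type*} (G : SimpleGraph V) (C : Set V) : Set V → Set V → Prop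
  | step {S : Set V} {v : V} (hv : v ∈ S) (hvC : v ∉ C)
      (hleaf : {u ∈ S | G.Adj v u}.ncard = 1) :
      LeafPruneStep G C S (S \ {v})

/-- `Vstar` is the vertex set of the residual tree: it is obtained from the full vertex
set by repeatedly deleting non-customer leaves, until no such deletion is possible. -/
def LeafPruned {V : Type*} (G : SimpleGraph V) (C : Set V) (Vstar : Set V) : Prop :=
  Relation.ReflTransGen (LeafPruneStep G C) Set.univ Vstar ∧
    ∀ S, ¬ LeafPruneStep G C Vstar S

/-!
In a forest there is at most one path between two vertices, so shortest paths are just paths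
and the weights play no role. Deleting a non-customer leaf keeps every customer and keeps the
vertex set path-convex (an internal vertex of a path has two neighbours on it), so the residual
set `S` is convex, contains `C`, and its leaves are customers.

A customer that is not a leaf of `S` has two neighbours in `S`; pushing a path through each of
them inside `S` until it can go no further ends at two leaves, along paths meeting only at the
customer. Conversely, if a leaf `f` is not in a cover `F'`, its two covering paths leave `f`
through different neighbours, at most one of which lies in `S`; the other path never re-enters
`S`, so `f` is joined to a point of `F'` by a path meeting `S` only at `f`. In a forest a vertex
outside the convex set `S` can be joined in this way to only one vertex of `S`, so choosing such
a point for every leaf gives an injection of the leaves into `F'`.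
-/

section DiPath

variable {V : Type*} {A : V → V → Prop} {a b v x y : V} {p q : List V}

theorem isDiPath_iff : IsDiPath A a b p ↔
    p.head? = some a ∧ p.getLast? = some b ∧ p.IsChain A ∧ p.Nodup := Iff.rfl

namespace IsDiPath

theorem isChain (h : IsDiPath A a b p) : p.IsChain A := h.2.2.1

theorem nodup (h : IsDiPath A a b p) : p.Nodup := h.2.2.2

theorem ne_nil (h : IsDiPath A a b p) : p ≠ [] := by
  rintro rfl
  simp [IsDiPath] at h

theorem start_mem (h : IsDiPath A a b p) : a ∈ p := List.mem_of_mem_head? h.1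

theorem end_mem (h : IsDiPath A a b p) : b ∈ p := List.mem_of_mem_getLast? h.2.1

theorem singleton (a : V) : IsDiPath A a a [a] := by
  simp [isDiPath_iff]

theorem pair (hab : A a b) (hne : a ≠ b) : IsDiPath A a b [a, b] := by
  simp [isDiPath_iff, hab, hne]

theorem eq_singleton (h : IsDiPath A a a p) : p = [a] := by
  obtain ⟨hhead, hlast, -, hnd⟩ := h
  match p, hhead with
  | [_], hhead => simpa using hhead
  | _ :: u :: rest, hhead =>
    obtain rfl : _ = a := by simpa using hhead
    exact absurd (List.mem_of_mem_getLast? (by simpa using hlast)) (List.nodup_cons.mp hnd).1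

theorem start_ne_end {u : V} {r : List V} (h : IsDiPath A a b (x :: u :: r)) : a ≠ b := by
  rintro rfl
  simpa using h.eq_singleton

theorem exists_eq_cons_cons (h : IsDiPath A a b p) (hab : a ≠ b) :
    ∃ u rest, p = a :: u :: rest ∧ A a u ∧ a ∉ u :: rest ∧ IsDiPath A u b (u :: rest) := by
  obtain ⟨hhead, hlast, hchain, hnd⟩ := h
  match p, hhead with
  | [_], hhead => simp_all
  | _ :: u :: rest, hhead =>
    obtain rfl : _ = a := by simpa using hhead
    exact ⟨u, rest, rfl, hchain.rel, (List.nodup_cons.mp hnd).1,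
      ⟨rfl, by simpa using hlast, hchain.of_cons, hnd.of_cons⟩⟩

theorem exists_prefix (h : IsDiPath A a b p) (hx : x ∈ p) :
    ∃ p₁, IsDiPath A a x p₁ ∧ p₁ <+: p := by
  obtain ⟨s, t, rfl⟩ := List.append_of_mem hx
  have hpre : s ++ [x] <+: s ++ x :: t := ⟨t, by simp⟩
  refine ⟨s ++ [x], ⟨?_, by simp, h.isChain.prefix hpre, h.nodup.sublist hpre.sublist⟩, hpre⟩
  have := h.1
  cases s <;> simpa using this

theorem reverse [Std.Symm A] (h : IsDiPath A a b p) : IsDiPath A b a p.reverse :=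
  ⟨by simpa using h.2.1, by simpa using h.1,
    List.isChain_reverse.mpr (h.isChain.imp fun _ _ hxy => Std.Symm.symm _ _ hxy),
    List.nodup_reverse.mpr h.nodup⟩

theorem concat (h : IsDiPath A a b p) (hby : A b y) (hy : y ∉ p) :
    IsDiPath A a y (p ++ [y]) := by
  refine ⟨?_, by simp, ?_, List.nodup_append.mpr ⟨h.nodup, by simp, ?_⟩⟩
  · rw [List.head?_append, h.1]; rfl
  · refine List.isChain_append.mpr ⟨h.isChain, by simp, fun z hz y' hy' => ?_⟩
    obtain rfl : z = b := by simpa [h.2.1] using hz.symm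
    obtain rfl : y' = y := by simpa using hy'.symm
    exact hby
  · rintro z hz _ hy' rfl
    exact hy (List.mem_singleton.mp hy' ▸ hz)

theorem append (h₁ : IsDiPath A a v p) (h₂ : IsDiPath A v b q)
    (hdisj : ∀ x ∈ p, x ∈ q → x = v) : IsDiPath A a b (p ++ q.tail) := by
  by_cases hvb : v = b
  · subst hvb
    simpa [h₂.eq_singleton] using h₁
  obtain ⟨u, rest, rfl, hvu, hv, hq⟩ := h₂.exists_eq_cons_cons hvb
  refine ⟨?_, ?_, ?_, ?_⟩
  · rw [List.head?_append, h₁.1]; rfl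
  · rw [List.tail_cons, List.getLast?_append, hq.2.1]; rfl
  · refine List.isChain_append.mpr ⟨h₁.isChain, hq.isChain, fun z hz y' hy' => ?_⟩
    obtain rfl : z = v := by simpa [h₁.2.1] using hz.symm
    obtain rfl : y' = u := by simpa using hy'.symm
    exact hvu
  · refine List.nodup_append.mpr ⟨h₁.nodup, hq.nodup, fun x hx y' hy' hxy => ?_⟩
    subst hxy
    exact hv (hdisj x hx (List.mem_cons_of_mem _ hy') ▸ hy')

theorem exists_pred_succ (h : IsDiPath A a b p) (hx : x ∈ p) (hxa : x ≠ a) (hxb : x ≠ b) :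
    ∃ y ∈ p, ∃ z ∈ p, y ≠ z ∧ A y x ∧ A x z := by
  obtain ⟨s, t, rfl⟩ := List.append_of_mem hx
  obtain ⟨s, y, rfl⟩ := (List.eq_nil_or_concat s).resolve_left <| by
    rintro rfl
    exact hxa (by simpa using h.1)
  obtain ⟨z, t, rfl⟩ := List.exists_cons_of_ne_nil (l := t) <| by
    rintro rfl
    exact hxb (by simpa using h.2.1)
  have hchain : (s ++ [y, x, z] ++ t).IsChain A := by simpa using h.isChain
  have hyx : A y x := (hchain.infix (l₁ := [y, x]) ⟨s, z :: t, by simp⟩).rel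
  have hxz : A x z := (hchain.infix (l₁ := [x, z]) ⟨s ++ [y], t, by simp⟩).rel
  refine ⟨y, by simp, z, by simp, fun hyz => ?_, hyx, hxz⟩
  subst hyz
  simpa [List.nodup_append] using h.nodup

end IsDiPath

end DiPath

attribute [local instance] SimpleGraph.symm

section Acyclic

open SimpleGraph

variable {V : Type*} {G : SimpleGraph V} {a b v x y y₁ y₂ : V} {p q : List V}

theorem SimpleGraph.Walk.IsPath.isDiPath_support {w : G.Walk a b} (hw : w.IsPath) :
    IsDiPath G.Adj a b w.support := by
  refine ⟨?_, ?_, w.isChain_adj_support, hw.support_nodup⟩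
  · rw [List.head?_eq_some_head w.support_ne_nil, Walk.head_support]
  · rw [List.getLast?_eq_some_getLast w.support_ne_nil, Walk.getLast_support]

theorem IsDiPath.exists_walk (h : IsDiPath G.Adj a b p) :
    ∃ w : G.Walk a b, w.IsPath ∧ w.support = p := by
  have ha : p.head h.ne_nil = a := Option.some_injective _ (List.head?_eq_some_head _ ▸ h.1)
  have hb : p.getLast h.ne_nil = b :=
    Option.some_injective _ (List.getLast?_eq_some_getLast _ ▸ h.2.1)
  refine ⟨(Walk.ofSupport p h.ne_nil h.isChain).copy ha hb, ?_, by simp⟩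
  simpa [Walk.isPath_def] using h.nodup

theorem IsDiPath.eq_of_isAcyclic (hG : G.IsAcyclic) (hp : IsDiPath G.Adj a b p)
    (hq : IsDiPath G.Adj a b q) : p = q := by
  obtain ⟨w₁, hw₁, rfl⟩ := hp.exists_walk
  obtain ⟨w₂, hw₂, rfl⟩ := hq.exists_walk
  have : (⟨w₁, hw₁⟩ : G.Path a b) = ⟨w₂, hw₂⟩ := (hG.subsingleton_path a b).elim _ _
  rw [show w₁ = w₂ from congrArg Subtype.val this]

theorem SimpleGraph.Connected.exists_isDiPath (hG : G.Connected) (a b : V) :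
    ∃ p, IsDiPath G.Adj a b p := by
  obtain ⟨w, hw⟩ := hG.exists_isPath a b
  exact ⟨_, hw.isDiPath_support⟩

theorem isShortestDiPath_iff_of_isAcyclic (hG : G.IsAcyclic) {w : V → V → ℝ} :
    IsShortestDiPath G.Adj w a b p ↔ IsDiPath G.Adj a b p :=
  ⟨And.left, fun hp => ⟨hp, fun _ hq => (hp.eq_of_isAcyclic hG hq) ▸ le_rfl⟩⟩

theorem IsDiPath.eq_cons_cons_of_adj (hG : G.IsAcyclic) (hp : IsDiPath G.Adj a b p)
    (hy : y ∈ p) (hay : G.Adj a y) : ∃ rest, p = a :: y :: rest := by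
  obtain ⟨p₁, hp₁, rest, rfl⟩ := hp.exists_prefix hy
  obtain rfl := hp₁.eq_of_isAcyclic hG (.pair hay hay.ne)
  exact ⟨rest, rfl⟩

theorem IsDiPath.notMem_or_notMem (hG : G.IsAcyclic) (hp : IsDiPath G.Adj a b p)
    (hy₁ : G.Adj b y₁) (hy₂ : G.Adj b y₂) (hne : y₁ ≠ y₂) : y₁ ∉ p ∨ y₂ ∉ p := by
  by_contra! h
  obtain ⟨r₁, hr₁⟩ := hp.reverse.eq_cons_cons_of_adj hG (List.mem_reverse.mpr h.1) hy₁
  obtain ⟨r₂, hr₂⟩ := hp.reverse.eq_cons_cons_of_adj hG (List.mem_reverse.mpr h.2) hy₂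
  have := hr₁.symm.trans hr₂
  simp only [List.cons.injEq] at this
  exact hne this.2.1

theorem IsDiPath.eq_start_of_mem_of_mem (hG : G.IsAcyclic) {u₁ u₂ b₁ b₂ : V} {r₁ r₂ : List V}
    (h₁ : IsDiPath G.Adj v b₁ (v :: u₁ :: r₁)) (h₂ : IsDiPath G.Adj v b₂ (v :: u₂ :: r₂))
    (hu : u₁ ≠ u₂) (hx₁ : x ∈ v :: u₁ :: r₁) (hx₂ : x ∈ v :: u₂ :: r₂) : x = v := by
  by_contra hxv
  obtain ⟨p₁, hp₁, hpre₁⟩ := h₁.exists_prefix hx₁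
  obtain ⟨p₂, hp₂, hpre₂⟩ := h₂.exists_prefix hx₂
  obtain ⟨u, rest, rfl, -⟩ := hp₁.exists_eq_cons_cons (Ne.symm hxv)
  obtain rfl := hp₁.eq_of_isAcyclic hG hp₂
  exact hu ((List.cons_prefix_cons.mp (List.cons_prefix_cons.mp hpre₁).2).1.symm.trans
    (List.cons_prefix_cons.mp (List.cons_prefix_cons.mp hpre₂).2).1)

end Acyclic

section Convex

variable {V : Type*} {G : SimpleGraph V} {C F S S₀ S' : Set V} {a b : V}

def IsPathConvex (G : SimpleGraph V) (S : Set V) : Prop :=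
  ∀ a ∈ S, ∀ b ∈ S, ∀ p, IsDiPath G.Adj a b p → ∀ x ∈ p, x ∈ S

def leavesIn (G : SimpleGraph V) (S : Set V) : Set V :=
  {v ∈ S | {u ∈ S | G.Adj v u}.ncard ≤ 1}

theorem isPathConvex_univ : IsPathConvex G Set.univ :=
  fun _ _ _ _ _ _ _ _ => trivial

theorem LeafPruneStep.subset (h : LeafPruneStep G C S S') (hC : C ⊆ S) : C ⊆ S' := by
  obtain ⟨-, hvC, -⟩ := h
  exact fun c hc => ⟨hC hc, fun hcv => hvC (hcv ▸ hc)⟩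

theorem LeafPruneStep.isPathConvex (h : LeafPruneStep G C S S') (hS : IsPathConvex G S) :
    IsPathConvex G S' := by
  obtain ⟨-, -, hleaf⟩ := h
  rintro a ⟨ha, hav⟩ b ⟨hb, hbv⟩ p hp x hx
  refine ⟨hS a ha b hb p hp x hx, ?_⟩
  rintro rfl
  obtain ⟨y, hy, z, hz, hyz, hyx, hxz⟩ := hp.exists_pred_succ hx (Ne.symm hav) (Ne.symm hbv)
  obtain ⟨u, hu⟩ := Set.ncard_eq_one.mp hleaf
  have hyu : y ∈ ({u} : Set V) := hu ▸ ⟨hS a ha b hb p hp y hy, hyx.symm⟩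
  have hzu : z ∈ ({u} : Set V) := hu ▸ ⟨hS a ha b hb p hp z hz, hxz⟩
  exact hyz (hyu.trans hzu.symm)

theorem subset_of_reflTransGen_leafPruneStep (h : Relation.ReflTransGen (LeafPruneStep G C) S₀ S)
    (h₀ : C ⊆ S₀) : C ⊆ S := by
  induction h with
  | refl => exact h₀
  | tail _ hstep ih => exact hstep.subset ih

theorem isPathConvex_of_reflTransGen_leafPruneStep
    (h : Relation.ReflTransGen (LeafPruneStep G C) S₀ S) (h₀ : IsPathConvex G S₀) :
    IsPathConvex G S := by
  induction h with
  | refl => exact h₀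
  | tail _ hstep ih => exact hstep.isPathConvex ih

theorem IsPathConvex.exists_adj_mem (hS : IsPathConvex G S) (hG : G.Connected) (ha : a ∈ S)
    (hb : b ∈ S) (hab : a ≠ b) : ∃ u ∈ S, G.Adj a u := by
  obtain ⟨p, hp⟩ := hG.exists_isDiPath a b
  obtain ⟨u, _, rfl, hau, -⟩ := hp.exists_eq_cons_cons hab
  exact ⟨u, hS a ha b hb _ hp u (by simp), hau⟩

theorem leavesIn_subset_of_forall_not_leafPruneStep [Finite V] (hG : G.Connected)
    (hS : IsPathConvex G S) (hCS : C ⊆ S) (hC : C.Nonempty)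
    (hmax : ∀ S', ¬ LeafPruneStep G C S S') : leavesIn G S ⊆ C := by
  rintro v ⟨hv, hdeg⟩
  by_contra hvC
  obtain ⟨c, hc⟩ := hC
  obtain ⟨u, hu, hvu⟩ := hS.exists_adj_mem hG hv (hCS hc) (fun h => hvC (h ▸ hc))
  have hpos : 0 < {u ∈ S | G.Adj v u}.ncard := (Set.ncard_pos (Set.toFinite _)).mpr ⟨u, hu, hvu⟩
  exact hmax _ (.step hv hvC (by omega))

theorem IsDiPath.exists_extension_to_leavesIn [Finite V] (hG : G.IsAcyclic) {b : V}
    {p : List V} (hp : IsDiPath G.Adj a b p) (hpS : ∀ x ∈ p, x ∈ S) :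
    ∃ f q, IsDiPath G.Adj a f q ∧ p <+: q ∧ (∀ x ∈ q, x ∈ S) ∧ f ∈ leavesIn G S := by
  by_cases hb : {u ∈ S | G.Adj b u}.ncard ≤ 1
  · exact ⟨b, p, hp, List.prefix_refl p, hpS, hpS b hp.end_mem, hb⟩
  obtain ⟨y₁, hy₁, y₂, hy₂, hne⟩ := (Set.one_lt_ncard (Set.toFinite _)).mp (not_le.mp hb)
  obtain ⟨y, hyS, hby, hyp⟩ : ∃ y ∈ S, G.Adj b y ∧ y ∉ p := by
    rcases hp.notMem_or_notMem hG hy₁.2 hy₂.2 hne with h | h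
    exacts [⟨y₁, hy₁.1, hy₁.2, h⟩, ⟨y₂, hy₂.1, hy₂.2, h⟩]
  have hlen := (hp.concat hby hyp).nodup.length_le_natCard
  obtain ⟨f, q, hq, hpre, hqS, hf⟩ := (hp.concat hby hyp).exists_extension_to_leavesIn hG
    (by simpa [or_imp, forall_and, hyS] using hpS)
  exact ⟨f, q, hq, (List.prefix_append p [y]).trans hpre, hqS, hf⟩
termination_by Nat.card V - p.length
decreasing_by
  simp only [List.length_append, List.length_singleton] at hlen ⊢
  omega

theorem isPathwiseCover_leavesIn [Finite V] (hG : G.IsAcyclic) (w : V → V → ℝ) (hCS : C ⊆ S)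
    (hLF : leavesIn G S ⊆ F) : IsPathwiseCover G.Adj w C F (leavesIn G S) := by
  refine ⟨hLF, fun c hc hcL => ?_⟩
  have hcS := hCS hc
  obtain ⟨u₁, hu₁, u₂, hu₂, hne⟩ :=
    (Set.one_lt_ncard (Set.toFinite _)).mp (not_le.mp fun h => hcL ⟨hcS, h⟩)
  obtain ⟨f₁, _, hp₁, ⟨r₁, rfl⟩, -, hf₁⟩ := IsDiPath.exists_extension_to_leavesIn (S := S) hG
    (IsDiPath.pair hu₁.2 hu₁.2.ne) (by simp [hcS, hu₁.1])
  obtain ⟨f₂, _, hp₂, ⟨r₂, rfl⟩, -, hf₂⟩ := IsDiPath.exists_extension_to_leavesIn (S := S) hG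
    (IsDiPath.pair hu₂.2 hu₂.2.ne) (by simp [hcS, hu₂.1])
  change IsDiPath G.Adj c f₁ (c :: u₁ :: r₁) at hp₁
  change IsDiPath G.Adj c f₂ (c :: u₂ :: r₂) at hp₂
  have hdisj : ∀ x ∈ c :: u₁ :: r₁, x ∈ c :: u₂ :: r₂ → x = c :=
    fun x hx₁ hx₂ => IsDiPath.eq_start_of_mem_of_mem hG hp₁ hp₂ hne hx₁ hx₂
  have hf₁c : f₁ ≠ c := hp₁.start_ne_end.symm
  have hf₂c : f₂ ≠ c := hp₂.start_ne_end.symm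
  refine ⟨f₁, hf₁, f₂, hf₂, fun h => hf₁c (hdisj f₁ hp₁.end_mem (h ▸ hp₂.end_mem)), hf₁c, hf₂c,
    _, _, (isShortestDiPath_iff_of_isAcyclic hG).mpr hp₁,
    (isShortestDiPath_iff_of_isAcyclic hG).mpr hp₂, hdisj⟩

end Convex

section Exit

variable {V : Type*} {G : SimpleGraph V} {C F F' S : Set V} {f y : V}

theorem IsPathConvex.eq_start_of_second_notMem (hS : IsPathConvex G S) {u x : V} {r : List V}
    (hf : f ∈ S) (hp : IsDiPath G.Adj f y (f :: u :: r)) (hu : u ∉ S) (hx : x ∈ f :: u :: r)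
    (hxS : x ∈ S) : x = f := by
  by_contra hxf
  obtain ⟨p₁, hp₁, hpre⟩ := hp.exists_prefix hx
  obtain ⟨u', _, rfl, -⟩ := hp₁.exists_eq_cons_cons (Ne.symm hxf)
  obtain rfl : u' = u := (List.cons_prefix_cons.mp (List.cons_prefix_cons.mp hpre).2).1
  exact hu (hS f hf x hxS _ hp₁ u' (by simp))

theorem IsPathConvex.exists_exit_path [Finite V] (hS : IsPathConvex G S) {w : V → V → ℝ}
    {f₁ f₂ : V} (hf : f ∈ leavesIn G S) (hcov : CoversPathwise G.Adj w f f₁ f₂) (h₁ : f₁ ≠ f)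
    (h₂ : f₂ ≠ f) :
    ∃ y ∈ ({f₁, f₂} : Set V), ∃ p, IsDiPath G.Adj f y p ∧ ∀ x ∈ p, x ∈ S → x = f := by
  obtain ⟨p₁, p₂, hp₁, hp₂, hdisj⟩ := hcov
  obtain ⟨u₁, _, rfl, hu₁, -⟩ := hp₁.1.exists_eq_cons_cons h₁.symm
  obtain ⟨u₂, _, rfl, hu₂, -⟩ := hp₂.1.exists_eq_cons_cons h₂.symm
  have hne : u₁ ≠ u₂ := by
    rintro rfl
    exact hu₁.ne (hdisj u₁ (by simp) (by simp)).symm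
  have hexit : u₁ ∉ S ∨ u₂ ∉ S := by
    by_contra! h
    have := (Set.one_lt_ncard (s := {u ∈ S | G.Adj f u}) (Set.toFinite _)).mpr
      ⟨u₁, ⟨h.1, hu₁⟩, u₂, ⟨h.2, hu₂⟩, hne⟩
    exact absurd hf.2 (not_le.mpr this)
  rcases hexit with h | h
  · exact ⟨f₁, by simp, _, hp₁.1, fun x hx => hS.eq_start_of_second_notMem hf.1 hp₁.1 h hx⟩
  · exact ⟨f₂, by simp, _, hp₂.1, fun x hx => hS.eq_start_of_second_notMem hf.1 hp₂.1 h hx⟩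

theorem IsPathConvex.eq_of_exit_paths (hS : IsPathConvex G S) (hG : G.IsAcyclic) {g₁ g₂ : V}
    {α β : List V} (hg₁ : g₁ ∈ S) (hg₂ : g₂ ∈ S) (hα : IsDiPath G.Adj y g₁ α)
    (hβ : IsDiPath G.Adj y g₂ β) (hαS : ∀ x ∈ α, x ∈ S → x = g₁)
    (hβS : ∀ x ∈ β, x ∈ S → x = g₂) : g₁ = g₂ := by
  induction α generalizing y β with
  | nil => exact absurd rfl hα.ne_nil
  | cons z α ih =>
    by_cases hy : y ∈ S
    · exact (hαS y hα.start_mem hy).symm.trans (hβS y hβ.start_mem hy)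
    obtain ⟨a, α', hαeq, -, -, hα'⟩ := hα.exists_eq_cons_cons fun h => hy (h ▸ hg₁)
    obtain ⟨b, β', rfl, -, -, hβ'⟩ := hβ.exists_eq_cons_cons fun h => hy (h ▸ hg₂)
    obtain ⟨rfl, rfl⟩ := List.cons_eq_cons.mp hαeq
    by_cases hab : a = b
    · subst hab
      exact ih hα' hβ' (fun x hx => hαS x (.tail _ hx)) (fun x hx => hβS x (.tail _ hx))
    -- the two paths leave `y` in different directions, so together they form a path through `y`
    have hpath := hα.reverse.append hβ fun x hx₁ hx₂ =>
      IsDiPath.eq_start_of_mem_of_mem hG hα hβ hab (List.mem_reverse.mp hx₁) hx₂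
    exact (hy <| hS g₁ hg₁ g₂ hg₂ _ hpath _ <|
      List.mem_append_left _ (List.mem_reverse.mpr hα.start_mem)).elim

theorem ncard_leavesIn_le [Finite V] (hG : G.IsAcyclic) (hS : IsPathConvex G S)
    {w : V → V → ℝ} (hLC : leavesIn G S ⊆ C) (hF' : IsPathwiseCover G.Adj w C F F') :
    (leavesIn G S).ncard ≤ F'.ncard := by
  have hexit : ∀ f ∈ leavesIn G S,
      ∃ y ∈ F', ∃ p, IsDiPath G.Adj f y p ∧ ∀ x ∈ p, x ∈ S → x = f := by
    intro f hf
    by_cases hfF' : f ∈ F'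
    · exact ⟨f, hfF', [f], .singleton f, fun x hx _ => List.mem_singleton.mp hx⟩
    obtain ⟨f₁, hf₁, f₂, hf₂, -, h₁, h₂, hcov⟩ := hF'.2 f (hLC hf) hfF'
    obtain ⟨y, hy, hpath⟩ := hS.exists_exit_path hf hcov h₁ h₂
    exact ⟨y, by rcases hy with rfl | rfl <;> assumption, hpath⟩
  choose! g hgF' p hp hpS using hexit
  refine Set.ncard_le_ncard_of_injOn g hgF' (fun f₁ hf₁ f₂ hf₂ heq => ?_) (Set.toFinite _)
  exact hS.eq_of_exit_paths hG hf₁.1 hf₂.1 (hp f₁ hf₁).reverse (heq ▸ (hp f₂ hf₂).reverse)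
    (fun x hx => hpS f₁ hf₁ x (List.mem_reverse.mp hx))
    (fun x hx => hpS f₂ hf₂ x (List.mem_reverse.mp hx))

end Exit

theorem tree_pruned_leaves_optimal_pathwise_cover_general
    {V : Type*} [Fintype V] (G : SimpleGraph V) (hG : G.IsTree)
    (w : V → V → ℝ)
    (C F : Set V) (hCF : C ⊆ F) (hC : C.Nonempty)
    (Vstar : Set V) (hVstar : LeafPruned G C Vstar)
    (Fstar : Set V)
    (hFstar : Fstar = {v ∈ Vstar | {u ∈ Vstar | G.Adj v u}.ncard ≤ 1}) :
    Fstar ⊆ C ∧ IsPathwiseCover G.Adj w C F Fstar ∧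
      ∀ F', IsPathwiseCover G.Adj w C F F' → Fstar.ncard ≤ F'.ncard := by
  obtain ⟨hreach, hmax⟩ := hVstar
  have hCV : C ⊆ Vstar := subset_of_reflTransGen_leafPruneStep hreach (Set.subset_univ C)
  have hconv : IsPathConvex G Vstar :=
    isPathConvex_of_reflTransGen_leafPruneStep hreach isPathConvex_univ
  have hLC : leavesIn G Vstar ⊆ C :=
    leavesIn_subset_of_forall_not_leafPruneStep hG.connected hconv hCV hC hmax
  subst hFstar
  exact ⟨hLC, isPathwiseCover_leavesIn hG.isAcyclic w hCV (hLC.trans hCF),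
    fun F' hF' => ncard_leavesIn_le hG.isAcyclic hconv hLC hF'⟩

/-- For a tree (viewed as a symmetric positively-weighted digraph)
with ∅ ≠ C ⊆ F, the set `F*` of leaves (vertices with at most one neighbour) of the
residual tree obtained by pruning non-customer leaves satisfies: `F* ⊆ C`, `F*` is a
pathwise-disjoint cover for `C`, and every pathwise-disjoint cover for `C` has size
at least `|F*|`. -/
theorem tree_pruned_leaves_optimal_pathwise_cover
    {V : Type*} [Fintype V] (G : SimpleGraph V) (hG : G.IsTree)
    (w : V → V → ℝ) (hw : ∀ x y, G.Adj x y → 0 < w x y)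
    (C F : Set V) (hCF : C ⊆ F) (hC : C.Nonempty)
    (Vstar : Set V) (hVstar : LeafPruned G C Vstar)
    (Fstar : Set V)
    (hFstar : Fstar = {v ∈ Vstar | {u ∈ Vstar | G.Adj v u}.ncard ≤ 1}) :
    Fstar ⊆ C ∧ IsPathwiseCover G.Adj w C F Fstar ∧
      ∀ F', IsPathwiseCover G.Adj w C F F' → Fstar.ncard ≤ F'.ncard :=
  tree_pruned_leaves_optimal_pathwise_cover_general G hG w C F hCF hC Vstar hVstar Fstar hFstar
end

section
/- Let G=(V,A) be a strongly connected directed graph with positive arc weights and C ⊆ F ⊆ V. If F' ⊆ F is a setwise-disjoint cover for C, then for every customer c ∈ C and every out-neighbor x of c, either c ∈ F' or there exists f ∈ F' with f ≠ c and x ∉ N(c,f). Consequently, the minimum size of a set X ⊆ F such that for every pair (c,x) of a customer c and out-neighbor x of c, X contains c or some f ≠ c with x ∉ N(c,f), is a lower bound on the minimum size of a setwise-disjoint cover for C. -/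
/-- `spNbrs A w c f` : the set `N(c,f)` of out-neighbours `x` of `c` that lie on
some shortest path from `c` to `f`. -/
def spNbrs {V : Type*} (A : V → V → Prop) (w : V → V → ℝ) (c f : V) : Set V :=
  {x | A c x ∧ ∃ p, IsShortestDiPath A w c f p ∧ x ∈ p}

/-- `X` is a hitting set for the pairs `(c,x)` of a customer `c` and an out-neighbour `x`
of `c`: `X ⊆ F` and for each such pair, `X` contains `c` or some facility `f ≠ c`
with `x ∉ N(c,f)`. -/
def HSLBHitting {V : Type*} (A : V → V → Prop) (w : V → V → ℝ) (C F X : Set V) : Prop :=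
  X ⊆ F ∧ ∀ c ∈ C, ∀ x, A c x → c ∈ X ∨ ∃ f ∈ X, f ≠ c ∧ x ∉ spNbrs A w c f

/-- In a strongly connected loopless digraph with positive arc
weights and `C ⊆ F`: (i) every setwise-disjoint cover `F'` of `C` is a hitting set
for the pairs `(c,x)` of customers and their out-neighbours; consequently (ii) the
minimum size of such a hitting set is a lower bound on the minimum size of a
setwise-disjoint cover for `C`. -/
theorem hitting_set_lower_bound
    {V : Type*} [Fintype V] (A : V → V → Prop) (w : V → V → ℝ)
    (hw : ∀ x y, A x y → 0 < w x y) (hirr : ∀ v, ¬ A v v)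
    (hconn : ∀ u v : V, ∃ p, IsDiPath A u v p)
    (C F : Set V) (hCF : C ⊆ F) :
    (∀ F', IsSetwiseCover A w C F F' →
      ∀ c ∈ C, ∀ x, A c x → c ∈ F' ∨ ∃ f ∈ F', f ≠ c ∧ x ∉ spNbrs A w c f) ∧
    sInf {n | ∃ X, HSLBHitting A w C F X ∧ X.ncard = n} ≤
      sInf {n | ∃ F', IsSetwiseCover A w C F F' ∧ F'.ncard = n} := by
  have key : ∀ F', IsSetwiseCover A w C F F' →
      ∀ c ∈ C, ∀ x, A c x → c ∈ F' ∨ ∃ f ∈ F', f ≠ c ∧ x ∉ spNbrs A w c f := by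
    intro F' hF' c hc x hx
    by_cases hcF : c ∈ F'
    · exact Or.inl hcF
    · obtain ⟨f₁, hf₁, f₂, hf₂, hne12, hne1, hne2, hcov⟩ := hF'.2 c hc hcF
      right
      by_cases h1 : x ∈ spNbrs A w c f₁
      · refine ⟨f₂, hf₂, hne2, ?_⟩
        rintro ⟨_, p₂, hp₂, hxp₂⟩
        obtain ⟨_, p₁, hp₁, hxp₁⟩ := h1
        exact hirr c (by rwa [hcov p₁ p₂ hp₁ hp₂ x hxp₁ hxp₂] at hx)
      · exact ⟨f₁, hf₁, hne1, h1⟩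
  refine ⟨key, ?_⟩
  have hm : F.ncard ∈ {n | ∃ F', IsSetwiseCover A w C F F' ∧ F'.ncard = n} :=
    ⟨F, ⟨subset_rfl, fun c hc hcF => absurd (hCF hc) hcF⟩, rfl⟩
  obtain ⟨F', hF', hcard⟩ := Nat.sInf_mem ⟨_, hm⟩
  exact Nat.sInf_le ⟨F', ⟨hF'.1, key F' hF'⟩, hcard⟩
end

section
/- For every integer n > 3 there exists an instance of the setwise-disjoint facility location problem — a strongly connected symmetric directed graph with unit arc weights, customer set C of size n and facility set F ⊇ C of size n+3 — such that the minimum size of a hitting set for the pairs (c,x) of customers and their neighbors (where facility f hits (c,x) if f = c or x ∉ N(c,f)) equals 3, while every setwise-disjoint cover for C has size exactly n. Hence the hitting set lower bound can underestimate the optimal setwise-disjoint cover size by a factor of n/3. -/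
/-!
The instance has customers `c₁, …, cₙ`, three spare facilities `g₁, g₂, g₃` and three hubs
`h₁, h₂, h₃`; each customer is joined to every hub, `gᵢ` and `hᵢ` to the two other hubs.
Every facility other than `cⱼ` lies at distance two from `cⱼ`, reached through all hubs it is
joined to, i.e. through at least two of the three. Hence any two of them share a hub on shortest
paths from `cⱼ`, no pair covers `cⱼ`, and every setwise-disjoint cover contains all customers.
On the other hand the pair `(cⱼ, hᵢ)` is hit by `gᵢ` and, among facilities other than `cⱼ`, only
by `gᵢ`: so `{g₁, g₂, g₃}` is a hitting set, and a hitting set missing some `gᵢ` contains every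
customer, hence has more than three elements.
-/

section Paths

variable {V : Type*} {A : V → V → Prop} {a b x : V} {p : List V}

lemma pathWeight_one (p : List V) : pathWeight (fun _ _ => (1 : ℝ)) p = p.tail.length := by
  simp [pathWeight, List.length_zip]

lemma isDiPath_singleton (a : V) : IsDiPath A a a [a] :=
  ⟨rfl, rfl, List.isChain_singleton a, List.nodup_singleton a⟩

lemma isDiPath_triple_iff : IsDiPath A a b [a, x, b] ↔ A a x ∧ A x b ∧ [a, x, b].Nodup := by
  show _ ∧ _ ∧ List.IsChain A [a, x, b] ∧ _ ↔ _
  simp [List.isChain_cons_cons, and_assoc]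

lemma IsDiPath.three_le_length (hp : IsDiPath A a b p) (hab : a ≠ b) (hnab : ¬ A a b) :
    3 ≤ p.length := by
  obtain ⟨hhead, hlast, hchain, -⟩ := hp
  match p with
  | [] => simp at hhead
  | [y] => simp_all
  | [y, z] =>
    simp only [List.head?_cons, List.getLast?_cons_cons, List.getLast?_singleton,
      Option.some.injEq] at hhead hlast
    subst hhead hlast
    exact absurd (List.isChain_pair.1 hchain) hnab
  | _ :: _ :: _ :: _ => simp

lemma IsDiPath.ne_of_triple (hp : IsDiPath A a b [a, x, b]) : a ≠ b := by
  have := (isDiPath_triple_iff.1 hp).2.2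
  simp_all

lemma exists_isDiPath_of_two_step (hirr : ∀ v, ¬ A v v) (h : ∃ m, A a m ∧ A m b) :
    ∃ p, IsDiPath A a b p := by
  obtain ⟨m, ham, hmb⟩ := h
  by_cases hab : a = b
  · exact hab ▸ ⟨[a], isDiPath_singleton a⟩
  refine ⟨[a, m, b], isDiPath_triple_iff.2 ⟨ham, hmb, ?_⟩⟩
  have := hirr a; have := hirr b
  simp only [List.nodup_cons, List.mem_cons, List.not_mem_nil]
  grind

-- With unit weights, once `a` and `b` are non-adjacent every path has weight at least two.
lemma isShortestDiPath_triple (hnab : ¬ A a b) (hp : IsDiPath A a b [a, x, b]) :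
    IsShortestDiPath A (fun _ _ => 1) a b [a, x, b] := by
  refine ⟨hp, fun q hq => ?_⟩
  have := hq.three_le_length hp.ne_of_triple hnab
  rw [pathWeight_one, pathWeight_one]
  simp only [List.tail_cons, List.length_cons, List.length_nil]
  exact_mod_cast by grind

lemma IsShortestDiPath.exists_eq_triple (hnab : ¬ A a b) (hm : IsDiPath A a b [a, x, b])
    (hp : IsShortestDiPath A (fun _ _ => 1) a b p) : ∃ y, p = [a, y, b] := by
  have hlen : p.length = 3 := by
    have hle := hp.2 _ hm
    rw [pathWeight_one, pathWeight_one] at hle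
    simp only [List.tail_cons, List.length_cons, List.length_nil, List.length_tail] at hle
    have := hp.1.three_le_length hm.ne_of_triple hnab
    have : p.length - 1 ≤ 2 := by exact_mod_cast hle
    omega
  obtain ⟨hhead, hlast, -, -⟩ := hp.1
  match p, hlen with
  | [u, y, v], _ =>
    simp only [List.head?_cons, List.getLast?_cons_cons, List.getLast?_singleton,
      Option.some.injEq] at hhead hlast
    exact ⟨y, by rw [hhead, hlast]⟩

end Paths

namespace GapInstance

inductive Vtx (n : ℕ) : Type
  | customer (j : Fin n)
  | spare (i : Fin 3)
  | hub (i : Fin 3)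

open Vtx

variable {n : ℕ}

instance : Finite (Vtx n) :=
  Finite.of_injective
    (fun v : Vtx n => match v with
      | customer j => (Sum.inl j : Fin n ⊕ Fin 3 ⊕ Fin 3)
      | spare i => Sum.inr (Sum.inl i)
      | hub i => Sum.inr (Sum.inr i))
    (by rintro (_ | _ | _) (_ | _ | _) h <;> simp_all)

def Adj : Vtx n → Vtx n → Prop
  | customer _, hub _ | hub _, customer _ => True
  | spare i, hub k | hub k, spare i | hub i, hub k => i ≠ k
  | _, _ => False

/-- The index of the hub that `v` is not joined to; a customer is joined to every hub, so its
value `0` is arbitrary. -/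
def Vtx.tag : Vtx n → Fin 3
  | customer _ => 0
  | spare i | hub i => i

def customers (n : ℕ) : Set (Vtx n) := Set.range customer

def spares (n : ℕ) : Set (Vtx n) := Set.range spare

def facilities (n : ℕ) : Set (Vtx n) := customers n ∪ spares n

lemma adj_symm {u v : Vtx n} (h : Adj u v) : Adj v u := by
  cases u <;> cases v <;> simp_all [Adj, eq_comm]

lemma adj_irrefl (v : Vtx n) : ¬ Adj v v := by
  cases v <;> simp [Adj]

lemma adj_hub_of_ne_tag {v : Vtx n} {k : Fin 3} (hk : k ≠ v.tag) : Adj (hub k) v := by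
  cases v <;> simp_all [Adj, Vtx.tag, eq_comm]

lemma exists_ne_ne (a b : Fin 3) : ∃ k, k ≠ a ∧ k ≠ b := by
  revert a b; decide

lemma exists_common_hub (u v : Vtx n) : ∃ k, Adj u (hub k) ∧ Adj (hub k) v := by
  obtain ⟨k, hu, hv⟩ := exists_ne_ne u.tag v.tag
  exact ⟨k, adj_symm (adj_hub_of_ne_tag hu), adj_hub_of_ne_tag hv⟩

lemma exists_isDiPath (u v : Vtx n) : ∃ p, IsDiPath Adj u v p :=
  let ⟨k, hk⟩ := exists_common_hub u v
  exists_isDiPath_of_two_step adj_irrefl ⟨hub k, hk⟩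

lemma not_adj_customer_of_mem_facilities {j : Fin n} {f : Vtx n} (hf : f ∈ facilities n) :
    ¬ Adj (customer j) f := by
  rcases hf with ⟨_, rfl⟩ | ⟨_, rfl⟩ <;> simp [Adj]

lemma eq_spare_of_not_adj_hub {f : Vtx n} {i : Fin 3} (hf : f ∈ facilities n)
    (h : ¬ Adj (hub i) f) : f = spare i := by
  rcases hf with ⟨_, rfl⟩ | ⟨_, rfl⟩ <;> simp_all [Adj]

section ShortestPaths

variable {j : Fin n} {f : Vtx n}

lemma isShortestDiPath_via_hub (hf : f ∈ facilities n) (hfj : f ≠ customer j) {k : Fin 3}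
    (hk : Adj (hub k) f) :
    IsShortestDiPath Adj (fun _ _ => 1) (customer j) f [customer j, hub k, f] := by
  refine isShortestDiPath_triple (not_adj_customer_of_mem_facilities hf)
    (isDiPath_triple_iff.2 ⟨trivial, hk, ?_⟩)
  have := adj_irrefl f
  simp only [List.nodup_cons, List.mem_cons, List.not_mem_nil]
  rcases hf with ⟨_, rfl⟩ | ⟨_, rfl⟩ <;> simp_all [Adj, eq_comm]

lemma hub_mem_spNbrs_iff (hf : f ∈ facilities n) (hfj : f ≠ customer j) (i : Fin 3) :
    hub i ∈ spNbrs Adj (fun _ _ => 1) (customer j) f ↔ Adj (hub i) f := by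
  refine ⟨fun ⟨_, p, hp, hmem⟩ => ?_, fun h => ⟨trivial, _, isShortestDiPath_via_hub hf hfj h,
    by simp⟩⟩
  obtain ⟨k, hk⟩ := exists_common_hub (customer j) f
  obtain ⟨y, rfl⟩ := hp.exists_eq_triple (not_adj_customer_of_mem_facilities hf)
    (isShortestDiPath_via_hub hf hfj hk.2).1
  have hy := (isDiPath_triple_iff.1 hp.1).2.1
  rcases hf with ⟨_, rfl⟩ | ⟨_, rfl⟩ <;> simp_all

-- Any two facilities other than `customer j` are reached from it through a common hub.
lemma not_coversSetwise {f₁ f₂ : Vtx n} (hf₁ : f₁ ∈ facilities n) (hf₂ : f₂ ∈ facilities n)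
    (h₁ : f₁ ≠ customer j) (h₂ : f₂ ≠ customer j) :
    ¬ CoversSetwise Adj (fun _ _ => 1) (customer j) f₁ f₂ := by
  intro hcov
  obtain ⟨k, hk₁, hk₂⟩ := exists_ne_ne f₁.tag f₂.tag
  have := hcov _ _ (isShortestDiPath_via_hub hf₁ h₁ (adj_hub_of_ne_tag hk₁))
    (isShortestDiPath_via_hub hf₂ h₂ (adj_hub_of_ne_tag hk₂)) (hub k) (by simp) (by simp)
  simp at this

end ShortestPaths

lemma customers_ncard : (customers n).ncard = n := by
  rw [customers, Set.ncard_range_of_injective fun _ _ => customer.inj, Nat.card_fin]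

lemma spares_ncard : (spares n).ncard = 3 := by
  rw [spares, Set.ncard_range_of_injective fun _ _ => spare.inj, Nat.card_fin]

lemma facilities_ncard : (facilities n).ncard = n + 3 := by
  rw [facilities, Set.ncard_union_eq, customers_ncard, spares_ncard]
  rw [Set.disjoint_left]
  rintro _ ⟨_, rfl⟩ ⟨_, h⟩
  cases h

lemma hslbHitting_spares :
    HSLBHitting Adj (fun _ _ => 1) (customers n) (facilities n) (spares n) := by
  refine ⟨Set.subset_union_right, ?_⟩
  rintro _ ⟨j, rfl⟩ (_ | _ | i) hx <;> simp only [Adj] at hx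
  refine Or.inr ⟨spare i, ⟨i, rfl⟩, by simp, ?_⟩
  rw [hub_mem_spNbrs_iff (Or.inr ⟨i, rfl⟩) (by simp)]
  simp [Adj]

-- The pair `(customer j, hub i)` is hit only by `customer j` itself or by `spare i`.
lemma spares_subset_or_customers_subset {X : Set (Vtx n)}
    (hX : HSLBHitting Adj (fun _ _ => 1) (customers n) (facilities n) X) :
    spares n ⊆ X ∨ customers n ⊆ X := by
  by_contra! h
  obtain ⟨_, ⟨i, rfl⟩, hi⟩ := Set.not_subset.1 h.1
  obtain ⟨_, ⟨j, rfl⟩, hj⟩ := Set.not_subset.1 h.2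
  rcases hX.2 _ ⟨j, rfl⟩ (hub i) trivial with h | ⟨f, hfX, hfj, hnot⟩
  · exact hj h
  rw [hub_mem_spNbrs_iff (hX.1 hfX) hfj] at hnot
  exact hi (eq_spare_of_not_adj_hub (hX.1 hfX) hnot ▸ hfX)

lemma customers_subset_of_isSetwiseCover {F' : Set (Vtx n)}
    (hF' : IsSetwiseCover Adj (fun _ _ => 1) (customers n) (facilities n) F') :
    customers n ⊆ F' := by
  rintro _ ⟨j, rfl⟩
  by_contra hj
  obtain ⟨f₁, h₁, f₂, h₂, -, hne₁, hne₂, hcov⟩ := hF'.2 _ ⟨j, rfl⟩ hj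
  exact not_coversSetwise (hF'.1 h₁) (hF'.1 h₂) hne₁ hne₂ hcov

end GapInstance

open GapInstance in
/-- For every `n > 3` there is an SDFL instance -- a strongly
connected, loopless, symmetric digraph with unit arc weights, a customer set `C` of
size `n` and a facility set `F ⊇ C` of size `n + 3` -- on which the minimum hitting
set for the (customer, neighbour) pairs has size `3`, while the minimum
setwise-disjoint cover of `C` has size `n`. -/
theorem hslb_linear_gap_instances (n : ℕ) (hn : 3 < n) :
    ∃ (V : Type) (_ : Finite V) (A : V → V → Prop) (C F : Set V),
      (∀ x y, A x y → A y x) ∧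
      (∀ v, ¬ A v v) ∧
      (∀ u v : V, ∃ p, IsDiPath A u v p) ∧
      C ⊆ F ∧ C.ncard = n ∧ F.ncard = n + 3 ∧
      (∃ X, HSLBHitting A (fun _ _ => 1) C F X ∧ X.ncard = 3) ∧
      (∀ X, HSLBHitting A (fun _ _ => 1) C F X → 3 ≤ X.ncard) ∧
      (∃ F', IsSetwiseCover A (fun _ _ => 1) C F F' ∧ F'.ncard = n) ∧
      (∀ F', IsSetwiseCover A (fun _ _ => 1) C F F' → n ≤ F'.ncard) := by
  refine ⟨Vtx n, inferInstance, Adj, customers n, facilities n, fun _ _ => adj_symm, adj_irrefl,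
    exists_isDiPath, Set.subset_union_left, customers_ncard, facilities_ncard,
    ⟨spares n, hslbHitting_spares, spares_ncard⟩, fun X hX => ?_,
    ⟨customers n, ⟨Set.subset_union_left, fun _ hc hc' => absurd hc hc'⟩, customers_ncard⟩,
    fun F' hF' =>
      customers_ncard.symm.trans_le (Set.ncard_le_ncard (customers_subset_of_isSetwiseCover hF'))⟩
  rcases spares_subset_or_customers_subset hX with h | h
  · exact spares_ncard.symm.trans_le (Set.ncard_le_ncard h)
  · have := customers_ncard.symm.trans_le (Set.ncard_le_ncard h)
    omega
end

section
/- For every positive integer N there exists a 2-connected undirected graph G on 7N+2 vertices with positive integer edge weights, with a set C of N+2 customer/facility vertices, such that the minimum unconstrained path-disjoint cover of C has size 2, while every pathwise-disjoint cover of C (using only shortest paths) has size at least N. Hence the unconstrained path-disjoint lower bound can underestimate the optimal pathwise-disjoint cover size by a factor linear in the number of vertices. -/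
/-- The pair `{f₁, f₂}` covers `c` with arbitrary (not necessarily shortest)
vertex-disjoint paths. -/
def CoversUnconstrained {V : Type*} (A : V → V → Prop) (c f₁ f₂ : V) : Prop :=
  ∃ p q, IsDiPath A c f₁ p ∧ IsDiPath A c f₂ q ∧ ∀ x ∈ p, x ∈ q → x = c

/-- `F'` is an unconstrained path-disjoint cover for the customers `C`
(facilities drawn from `F`). -/
def IsUnconstrainedCover {V : Type*} (A : V → V → Prop) (C F F' : Set V) : Prop :=
  F' ⊆ F ∧ ∀ c ∈ C, c ∉ F' → ∃ f₁ ∈ F', ∃ f₂ ∈ F', f₁ ≠ f₂ ∧ f₁ ≠ c ∧ f₂ ≠ c ∧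
    CoversUnconstrained A c f₁ f₂

/-- An undirected graph is 2-connected if it has at least 3 vertices and remains
connected after the deletion of any single vertex. -/
def TwoConnected {V : Type*} (G : SimpleGraph V) : Prop :=
  3 ≤ Nat.card V ∧ ∀ v : V, (G.induce {u | u ≠ v}).Connected

/-!
Take two hubs adjacent to every vertex and `7N` ordinary vertices, with weight `1` on the
edges at the first hub and `3` on all others. Between two ordinary vertices the path through
the first hub has weight `2`, and every path avoiding it contains an edge of weight `3`; so
every shortest path between customers passes through that hub, no customer can be covered
pathwise-disjointly by other customers, and a pathwise-disjoint cover must contain all `N + 2`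
customers. Routing one path through each hub instead shows that any two customers form an
unconstrained path-disjoint cover.
-/

namespace IsDiPath

variable {V : Type*} {A : V → V → Prop} {a b c : V} {p : List V}

lemma pathArcs_ne_nil (hp : IsDiPath A a b p) (hab : a ≠ b) : pathArcs p ≠ [] := by
  obtain ⟨hhead, hlast, -, -⟩ := hp
  rcases p with _ | ⟨x, _ | ⟨y, t⟩⟩
  · simp at hhead
  · simp_all
  · simp [pathArcs]

lemma of_three (hab : A a b) (hbc : A b c) (hab' : a ≠ b) (hac : a ≠ c) (hbc' : b ≠ c) :
    IsDiPath A a c [a, b, c] :=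
  ⟨rfl, rfl, List.isChain_cons_cons.mpr ⟨hab, List.isChain_pair.mpr hbc⟩,
    by simp [hab', hac, hbc']⟩

end IsDiPath

section PathWeight

variable {V : Type*} {w : V → V → ℝ}

lemma pathWeight_three (a b c : V) : pathWeight w [a, b, c] = w a b + w b c := by
  simp [pathWeight]

lemma le_pathWeight_of_mem_pathArcs (hw : ∀ x y, 0 ≤ w x y) {p : List V} {e : V × V}
    (he : e ∈ pathArcs p) : w e.1 e.2 ≤ pathWeight w p :=
  List.single_le_sum (by simp only [List.mem_map]; rintro _ ⟨_, -, rfl⟩; exact hw _ _) _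
    (List.mem_map_of_mem he)

lemma IsShortestDiPath.mem_of_pathWeight_lt {A : V → V → Prop} {a b v : V} {p q : List V}
    (hw : ∀ x y, 0 ≤ w x y) (hp : IsShortestDiPath A w a b p) (hab : a ≠ b)
    (hq : IsDiPath A a b q) (hlt : ∀ x y, x ≠ v → y ≠ v → pathWeight w q < w x y) : v ∈ p := by
  by_contra hv
  obtain ⟨e, he⟩ := List.exists_mem_of_ne_nil _ (hp.1.pathArcs_ne_nil hab)
  have he₁ : e.1 ≠ v := fun h => hv (h ▸ (List.of_mem_zip he).1)
  have he₂ : e.2 ≠ v := fun h => hv (h ▸ List.mem_of_mem_tail (List.of_mem_zip he).2)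
  linarith [le_pathWeight_of_mem_pathArcs hw he, hp.2 q hq, hlt _ _ he₁ he₂]

end PathWeight

section Covers

variable {V : Type*} {A : V → V → Prop} {C F F' : Set V}

lemma IsUnconstrainedCover.two_le_ncard [Finite V] (hC : 2 ≤ C.ncard)
    (hF' : IsUnconstrainedCover A C F F') : 2 ≤ F'.ncard := by
  by_cases hCF' : C ⊆ F'
  · exact hC.trans (Set.ncard_le_ncard hCF')
  · obtain ⟨c, hc, hcF'⟩ := Set.not_subset.mp hCF'
    obtain ⟨f₁, hf₁, f₂, hf₂, hne, -⟩ := hF'.2 c hc hcF'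
    rw [← Set.ncard_pair hne]
    exact Set.ncard_le_ncard (Set.pair_subset hf₁ hf₂)

lemma isUnconstrainedCover_pair {f₁ f₂ : V} (hf₁ : f₁ ∈ F) (hf₂ : f₂ ∈ F) (hne : f₁ ≠ f₂)
    (hcov : ∀ c ∈ C, c ≠ f₁ → c ≠ f₂ → CoversUnconstrained A c f₁ f₂) :
    IsUnconstrainedCover A C F {f₁, f₂} := by
  refine ⟨Set.pair_subset hf₁ hf₂, fun c hc hcF => ?_⟩
  have hc₁ : c ≠ f₁ := fun h => hcF (.inl h)
  have hc₂ : c ≠ f₂ := fun h => hcF (.inr h)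
  exact ⟨f₁, .inl rfl, f₂, .inr rfl, hne, hc₁.symm, hc₂.symm, hcov c hc hc₁ hc₂⟩

lemma IsPathwiseCover.subset_of_not_coversPathwise {w : V → V → ℝ}
    (hC : ∀ c ∈ C, ∀ f₁ ∈ F, ∀ f₂ ∈ F, f₁ ≠ c → f₂ ≠ c → ¬ CoversPathwise A w c f₁ f₂)
    (hF' : IsPathwiseCover A w C F F') : C ⊆ F' := by
  intro c hc
  by_contra hcF'
  obtain ⟨f₁, hf₁, f₂, hf₂, -, hf₁c, hf₂c, hcov⟩ := hF'.2 c hc hcF'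
  exact hC c hc f₁ (hF'.1 hf₁) f₂ (hF'.1 hf₂) hf₁c hf₂c hcov

end Covers

lemma SimpleGraph.connected_of_forall_adj {V : Type*} {G : SimpleGraph V} {u : V}
    (h : ∀ v, v ≠ u → G.Adj u v) : G.Connected := by
  have hreach : ∀ v, G.Reachable u v := fun v => by
    by_cases hv : v = u
    exacts [hv ▸ .rfl, (h v hv).reachable]
  exact (SimpleGraph.connected_iff _).mpr
    ⟨fun v v' => (hreach v).symm.trans (hreach v'), ⟨u⟩⟩

def hubGraph {V : Type*} (H : Set V) : SimpleGraph V :=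
  SimpleGraph.fromRel fun x _ => x ∈ H

section HubWeight

variable {V : Type*} [DecidableEq V] (h x y : V)

def hubWeight : ℕ :=
  if x = h ∨ y = h then 1 else 3

lemma hubWeight_pos : 0 < hubWeight h x y := by
  unfold hubWeight
  split_ifs <;> norm_num

lemma hubWeight_comm : hubWeight h x y = hubWeight h y x := by
  simp only [hubWeight, or_comm]

end HubWeight

namespace hubGraph

variable {V : Type*} {H : Set V} {x y h h₁ h₂ c f f₁ f₂ : V}

lemma adj_iff : (hubGraph H).Adj x y ↔ x ≠ y ∧ (x ∈ H ∨ y ∈ H) :=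
  SimpleGraph.fromRel_adj _ _ _

lemma adj_of_mem_left (hx : x ∈ H) (hxy : x ≠ y) : (hubGraph H).Adj x y :=
  adj_iff.mpr ⟨hxy, .inl hx⟩

lemma isDiPath_via_hub (hh : h ∈ H) (hx : x ≠ h) (hy : y ≠ h) (hxy : x ≠ y) :
    IsDiPath (hubGraph H).Adj x y [x, h, y] :=
  .of_three (adj_of_mem_left hh hx.symm).symm (adj_of_mem_left hh hy.symm) hx hxy hy.symm

lemma twoConnected (hV : 3 ≤ Nat.card V) (hh₁ : h₁ ∈ H) (hh₂ : h₂ ∈ H) (hne : h₁ ≠ h₂) :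
    TwoConnected (hubGraph H) := by
  refine ⟨hV, fun v => ?_⟩
  obtain ⟨h, hh, hhv⟩ : ∃ h ∈ H, h ≠ v := by
    by_cases hv : h₁ = v
    · exact ⟨h₂, hh₂, hv ▸ hne.symm⟩
    · exact ⟨h₁, hh₁, hv⟩
  exact SimpleGraph.connected_of_forall_adj (u := ⟨h, hhv⟩) fun u hu =>
    adj_of_mem_left hh fun e => hu (Subtype.ext e).symm

lemma coversUnconstrained (hh₁ : h₁ ∈ H) (hh₂ : h₂ ∈ H) (hne : h₁ ≠ h₂) (hc : c ∉ H)
    (hf₁ : f₁ ∉ H) (hf₂ : f₂ ∉ H) (hcf₁ : c ≠ f₁) (hcf₂ : c ≠ f₂) (hf₁₂ : f₁ ≠ f₂) :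
    CoversUnconstrained (hubGraph H).Adj c f₁ f₂ := by
  refine ⟨[c, h₁, f₁], [c, h₂, f₂],
    isDiPath_via_hub hh₁ (ne_of_mem_of_not_mem hh₁ hc).symm
      (ne_of_mem_of_not_mem hh₁ hf₁).symm hcf₁,
    isDiPath_via_hub hh₂ (ne_of_mem_of_not_mem hh₂ hc).symm
      (ne_of_mem_of_not_mem hh₂ hf₂).symm hcf₂, ?_⟩
  simp only [List.mem_cons, List.not_mem_nil, or_false]
  rintro x (rfl | rfl | rfl) (hx | hx | hx) <;> first | rfl | simp_all

variable [DecidableEq V]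

lemma hub_mem_of_isShortestDiPath (hh : h ∈ H) (hc : c ≠ h) (hf : f ≠ h) (hcf : c ≠ f)
    {p : List V}
    (hp : IsShortestDiPath (hubGraph H).Adj (fun x y => (hubWeight h x y : ℝ)) c f p) :
    h ∈ p := by
  refine hp.mem_of_pathWeight_lt (fun _ _ => Nat.cast_nonneg _) hcf
    (isDiPath_via_hub hh hc hf hcf) fun x y hx hy => ?_
  norm_num [pathWeight_three, hubWeight, hx, hy]

lemma not_coversPathwise (hh : h ∈ H) (hc : c ≠ h) (hf₁ : f₁ ≠ h) (hf₂ : f₂ ≠ h)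
    (hf₁c : f₁ ≠ c) (hf₂c : f₂ ≠ c) :
    ¬ CoversPathwise (hubGraph H).Adj (fun x y => (hubWeight h x y : ℝ)) c f₁ f₂ := by
  rintro ⟨p₁, p₂, hp₁, hp₂, hdisj⟩
  exact hc.symm <| hdisj h (hub_mem_of_isShortestDiPath hh hc hf₁ hf₁c.symm hp₁)
    (hub_mem_of_isShortestDiPath hh hc hf₂ hf₂c.symm hp₂)

end hubGraph

/-- For every `N ≥ 1` there is a 2-connected undirected graph on
`7N + 2` vertices with positive integer symmetric edge weights and a set `C` of
`N + 2` customer/facility vertices, for which the minimum unconstrained path-disjoint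
cover of `C` has size `2` while every pathwise-disjoint (shortest-path) cover of `C`
has size at least `N`. -/
theorem updfl_lower_bound_linear_gap_instances (N : ℕ) (hN : 0 < N) :
    ∃ (V : Type) (_ : Finite V) (G : SimpleGraph V) (w : V → V → ℕ) (C : Set V),
      Nat.card V = 7 * N + 2 ∧
      TwoConnected G ∧
      (∀ x y, G.Adj x y → 0 < w x y ∧ w x y = w y x) ∧
      C.ncard = N + 2 ∧
      (∃ F', IsUnconstrainedCover G.Adj C C F' ∧ F'.ncard = 2) ∧
      (∀ F', IsUnconstrainedCover G.Adj C C F' → 2 ≤ F'.ncard) ∧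
      (∀ F', IsPathwiseCover G.Adj (fun u v => (w u v : ℝ)) C C F' → N ≤ F'.ncard) := by
  let H : Set (Fin 2 ⊕ Fin (7 * N)) := Set.range Sum.inl
  let customer : Fin (N + 2) → Fin 2 ⊕ Fin (7 * N) := Sum.inr ∘ Fin.castLE (by omega)
  let C := Set.range customer
  have hcard : Nat.card (Fin 2 ⊕ Fin (7 * N)) = 7 * N + 2 := by simp [add_comm]
  have hC : C.ncard = N + 2 := by
    rw [Set.ncard_range_of_injective (Sum.inr_injective.comp (Fin.castLE_injective _))]
    simp
  have hH₀ : Sum.inl 0 ∈ H := ⟨0, rfl⟩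
  have hH₁ : Sum.inl 1 ∈ H := ⟨1, rfl⟩
  have hCH : ∀ c ∈ C, c ∉ H := by rintro _ ⟨i, rfl⟩ ⟨j, hj⟩; cases hj
  have hne : ∀ {x y}, x ∈ C → y ∈ H → x ≠ y := fun hx hy e => hCH _ hx (e ▸ hy)
  have hpair : IsUnconstrainedCover (hubGraph H).Adj C C {customer 0, customer 1} :=
    isUnconstrainedCover_pair ⟨0, rfl⟩ ⟨1, rfl⟩ (by simp [customer]) fun c hc hc₀ hc₁ =>
      hubGraph.coversUnconstrained hH₀ hH₁ (by simp) (hCH c hc) (hCH _ ⟨0, rfl⟩)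
        (hCH _ ⟨1, rfl⟩) hc₀ hc₁ (by simp [customer])
  refine ⟨_, inferInstance, hubGraph H, hubWeight (Sum.inl 0), C, hcard,
    hubGraph.twoConnected (by omega) hH₀ hH₁ (by simp),
    fun x y _ => ⟨hubWeight_pos .., hubWeight_comm ..⟩, hC,
    ⟨_, hpair, Set.ncard_pair (by simp [customer])⟩, fun F' hF' => hF'.two_le_ncard (by omega),
    fun F' hF' => ?_⟩
  have hCF' := hF'.subset_of_not_coversPathwise fun c hc f₁ hf₁ f₂ hf₂ hf₁c hf₂c =>
    hubGraph.not_coversPathwise hH₀ (hne hc hH₀) (hne hf₁ hH₀) (hne hf₂ hH₀) hf₁c hf₂c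
  have := Set.ncard_le_ncard hCF'
  omega
end

section
/- Let 1 ≤ t ≤ |F| with t ≥ |F|/3, and let I be an instance of the setwise-disjoint facility location problem with at least one t-good customer. With X and Y the two greedy hitting sets generated by one run of DHS_t as above, one has |X| ≤ 1 + 2.47·ln|C_t| and |X ∪ Y| ≤ (3.47·ln|C_t| + 2)·OPT_t(I), where OPT_t(I) ≥ 1 is the minimum size of a setwise-disjoint cover of the set C_t of t-good customers. -/
/-- A facility `f` is *good* for a customer `c` if `f ≠ c` and `|N(c,f)| = 1`,
i.e. all shortest paths from `c` to `f` leave `c` via the same arc. -/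
def GoodFor {V : Type*} (A : V → V → Prop) (w : V → V → ℝ) (F : Set V) (c f : V) : Prop :=
  f ∈ F ∧ f ≠ c ∧ (spNbrs A w c f).ncard = 1

/-- `C_t` : the set of `t`-good customers, i.e. customers with at least `t` good facilities. -/
def tGoodCustomers {V : Type*} (A : V → V → Prop) (w : V → V → ℝ) (C F : Set V) (t : ℕ) :
    Set V :=
  {c ∈ C | t ≤ {f | GoodFor A w F c f}.ncard}

/-- `S_c` : the customer `c` together with all good facilities for `c`. -/
def Sgood {V : Type*} (A : V → V → Prop) (w : V → V → ℝ) (F : Set V) (c : V) : Set V :=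
  {c} ∪ {f | GoodFor A w F c f}

/-- The customer `c` is covered by the set `X`: either `c ∈ X`, or some pair of
distinct facilities in `X - {c}` covers `c` in a setwise-disjoint fashion. -/
def CoveredBy {V : Type*} (A : V → V → Prop) (w : V → V → ℝ) (X : Set V) (c : V) : Prop :=
  c ∈ X ∨ ∃ f₁ ∈ X, ∃ f₂ ∈ X, f₁ ≠ f₂ ∧ f₁ ≠ c ∧ f₂ ≠ c ∧ CoversSetwise A w c f₁ f₂

/-- `F_c` : the customer `c` together with all facilities `f ≠ c` all of whose
shortest paths from `c` avoid the vertex `x`. -/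
def Favoid {V : Type*} (A : V → V → Prop) (w : V → V → ℝ) (F : Set V) (x c : V) : Set V :=
  {c} ∪ {f ∈ F | f ≠ c ∧ ∀ p, IsShortestDiPath A w c f p → x ∉ p}

/-- The members of the family (indexed by `I`) not yet hit by the set `X`. -/
def unhitSets {V ι : Type*} (Fam : ι → Set V) (I : Set ι) (X : Set V) : Set ι :=
  {i ∈ I | ∀ f ∈ X, f ∉ Fam i}

/-- `GreedyRun F Fam I l` : the list `l` (most recently chosen element first) is a
run of the greedy hitting-set heuristic over ground set `F` on the family
`{Fam i : i ∈ I}`: each chosen element is picked, while some set is still unhit,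
so as to hit a maximum number of as-yet-unhit sets. -/
def GreedyRun {V ι : Type*} (F : Set V) (Fam : ι → Set V) (I : Set ι) : List V → Prop
  | [] => True
  | f :: l =>
      GreedyRun F Fam I l ∧ f ∈ F ∧ (unhitSets Fam I {v | v ∈ l}).Nonempty ∧
        ∀ g ∈ F,
          {i ∈ unhitSets Fam I {v | v ∈ l} | g ∈ Fam i}.ncard ≤
          {i ∈ unhitSets Fam I {v | v ∈ l} | f ∈ Fam i}.ncard

/-- `X` is a hitting set produced by the greedy hitting-set heuristic. -/
def IsGreedyHittingSet {V ι : Type*} (F : Set V) (Fam : ι → Set V) (I : Set ι)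
    (X : Set V) : Prop :=
  ∃ l : List V, GreedyRun F Fam I l ∧ X = {v | v ∈ l} ∧ unhitSets Fam I X = ∅

/-!
Both bounds come from the classical analysis of the greedy hitting-set heuristic: if every
nonempty subfamily of the sets has an element of `F` hitting a `δ`-fraction of it, and
`1 - δ ≤ exp (-c)`, then after `n` greedy picks at most `exp (-c n) · |I|` sets are still unhit,
so a greedy hitting set has at most `1 + log |I| / c` elements.

For `X`, each `S_c` consists of at least `t + 1 ≥ |F| / 3` elements of `F`, so double counting
gives `δ = 1/3`, and `1 / 2.47 ≤ log (3/2)`.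

For `Y`, an optimal setwise-disjoint cover `F*` of `C_t` meets every `F_c`: when `c ∉ F*`, the
out-neighbour `x_c ≠ c` lies on shortest paths to at most one of the two facilities covering `c`.
So some element of `F*` hits a `1 / OPT` fraction of the unhit sets, and
`|Y| ≤ 1 + OPT · ln |C_t|`.
-/

theorem Set.exists_mem_ncard_mul_le_ncard_mul {V ι : Type*} {F : Set V} {U : Set ι}
    (Fam : ι → Set V) (hF : F.Finite) (hFne : F.Nonempty) (hU : U.Finite) {s : ℕ}
    (hs : ∀ i ∈ U, s ≤ (F ∩ Fam i).ncard) :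
    ∃ g ∈ F, U.ncard * s ≤ F.ncard * {i ∈ U | g ∈ Fam i}.ncard := by
  classical
  lift F to Finset V using hF
  lift U to Finset ι using hU
  obtain ⟨g, hg, hmax⟩ := F.exists_max_image (fun g => (U.filter (g ∈ Fam ·)).card)
    (Finset.coe_nonempty.mp hFne)
  refine ⟨g, hg, ?_⟩
  have key := Finset.card_mul_le_card_mul (fun i g => g ∈ Fam i) (s := U) (t := F) (m := s)
    (fun i hi => by
      rw [Finset.bipartiteAbove, ← Set.ncard_coe_finset, Finset.coe_filter]
      exact hs i hi) hmax
  simpa [← Finset.coe_filter] using key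

section Greedy

variable {V ι : Type*} {F : Set V} {Fam : ι → Set V} {I : Set ι} {δ c : ℝ}

def FractionallyHittable (F : Set V) (Fam : ι → Set V) (I : Set ι) (δ : ℝ) : Prop :=
  ∀ U ⊆ I, U.Nonempty → ∃ g ∈ F, δ * U.ncard ≤ {i ∈ U | g ∈ Fam i}.ncard

theorem unhitSets_cons (f : V) (l : List V) :
    unhitSets Fam I {v | v ∈ f :: l} = {i ∈ unhitSets Fam I {v | v ∈ l} | f ∉ Fam i} := by
  ext i
  simp only [unhitSets, List.mem_cons, Set.mem_ofPred_eq, forall_eq_or_imp]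
  tauto

theorem GreedyRun.ncard_unhitSets_le (hI : I.Finite) (hδc : 1 - δ ≤ Real.exp (-c))
    (hstep : FractionallyHittable F Fam I δ)
    {l : List V} (hl : GreedyRun F Fam I l) :
    ((unhitSets Fam I {v | v ∈ l}).ncard : ℝ) ≤ Real.exp (-c * l.length) * I.ncard := by
  induction l with
  | nil =>
    simpa using Set.ncard_le_ncard (fun i (hi : i ∈ unhitSets Fam I _) => hi.1) hI
  | cons f l ih =>
    obtain ⟨hl, -, hne, hmax⟩ := hl
    set U := unhitSets Fam I {v | v ∈ l}
    have hUI : U ⊆ I := fun i hi => hi.1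
    obtain ⟨g, hg, hδ⟩ := hstep U hUI hne
    have hsplit : ({i ∈ U | f ∈ Fam i}.ncard : ℝ) + {i ∈ U | f ∉ Fam i}.ncard = U.ncard := by
      exact_mod_cast Set.ncard_inter_add_ncard_sdiff_eq_ncard U {i | f ∈ Fam i} (hI.subset hUI)
    have hfg : ({i ∈ U | g ∈ Fam i}.ncard : ℝ) ≤ {i ∈ U | f ∈ Fam i}.ncard := by
      exact_mod_cast hmax g hg
    rw [unhitSets_cons]
    calc ({i ∈ U | f ∉ Fam i}.ncard : ℝ) ≤ (1 - δ) * U.ncard := by linarith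
      _ ≤ Real.exp (-c) * (Real.exp (-c * l.length) * I.ncard) := by gcongr; exact ih hl
      _ = Real.exp (-c * (f :: l).length) * I.ncard := by
          rw [← mul_assoc, ← Real.exp_add, List.length_cons]; push_cast; ring_nf

theorem GreedyRun.length_le (hI : I.Finite) (hc : 0 < c) (hδc : 1 - δ ≤ Real.exp (-c))
    (hstep : FractionallyHittable F Fam I δ)
    {l : List V} (hl : GreedyRun F Fam I l) :
    (l.length : ℝ) ≤ 1 + Real.log I.ncard / c := by
  have hlog : 0 ≤ Real.log I.ncard / c := div_nonneg (Real.log_natCast_nonneg _) hc.le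
  cases l with
  | nil => simp only [List.length_nil, Nat.cast_zero]; linarith
  | cons f l =>
    obtain ⟨hl, -, hne, -⟩ := hl
    have hunhit : (1 : ℝ) ≤ (unhitSets Fam I {v | v ∈ l}).ncard := by
      exact_mod_cast (Set.ncard_pos (hI.subset fun i hi => hi.1)).mpr hne
    have hI0 : (0 : ℝ) < I.ncard := by
      exact_mod_cast (Set.ncard_pos hI).mpr (hne.mono fun i hi => hi.1)
    have hexp : Real.exp (c * l.length) ≤ I.ncard := by
      have := hunhit.trans (hl.ncard_unhitSets_le hI hδc hstep)
      rw [neg_mul, Real.exp_neg] at this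
      rwa [le_inv_mul_iff₀ (Real.exp_pos _), mul_one] at this
    rw [← Real.le_log_iff_exp_le hI0, ← le_div_iff₀' hc] at hexp
    rw [List.length_cons, Nat.cast_succ]
    linarith

theorem IsGreedyHittingSet.ncard_le {X : Set V} (hX : IsGreedyHittingSet F Fam I X)
    (hI : I.Finite) (hc : 0 < c) (hδc : 1 - δ ≤ Real.exp (-c))
    (hstep : FractionallyHittable F Fam I δ) :
    (X.ncard : ℝ) ≤ 1 + Real.log I.ncard / c := by
  classical
  obtain ⟨l, hl, rfl, -⟩ := hX
  have hcard : {v | v ∈ l}.ncard ≤ l.length := by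
    simpa [← List.coe_toFinset] using l.toFinset_card_le
  exact (Nat.cast_le.mpr hcard).trans (hl.length_le hI hc hδc hstep)

end Greedy

section Facility

variable {V : Type*} {A : V → V → Prop} {w : V → V → ℝ} {C F : Set V}

theorem sgood_subset {c : V} (hc : c ∈ F) : Sgood A w F c ⊆ F := by
  rintro f (rfl | hf)
  exacts [hc, hf.1]

theorem add_one_le_ncard_sgood [Finite V] {t : ℕ} {c : V} (hc : c ∈ tGoodCustomers A w C F t) :
    t + 1 ≤ (Sgood A w F c).ncard := by
  rw [Sgood, Set.singleton_union, Set.ncard_insert_of_notMem fun hf => hf.2.1 rfl]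
  exact Nat.succ_le_succ hc.2

theorem fractionallyHittable_sgood [Finite V] (hCF : C ⊆ F) {t : ℕ}
    (ht3 : (F.ncard : ℝ) ≤ 3 * t) :
    FractionallyHittable F (Sgood A w F) (tGoodCustomers A w C F t) (1 / 3) := by
  intro U hU hUne
  have hUF : U ⊆ F := fun c hc => hCF (hU hc).1
  obtain ⟨g, hg, hcount⟩ := Set.exists_mem_ncard_mul_le_ncard_mul (Sgood A w F)
    (Set.toFinite F) (hUne.mono hUF) (Set.toFinite U) (s := t + 1) fun c hc => by
      rw [Set.inter_eq_right.mpr (sgood_subset (hUF hc))]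
      exact add_one_le_ncard_sgood (hU hc)
  refine ⟨g, hg, ?_⟩
  have hcount' : (U.ncard : ℝ) * (t + 1) ≤ F.ncard * {c ∈ U | g ∈ Sgood A w F c}.ncard := by
    exact_mod_cast hcount
  nlinarith [Nat.cast_nonneg (α := ℝ) {c ∈ U | g ∈ Sgood A w F c}.ncard,
    Nat.cast_nonneg (α := ℝ) t]

theorem ne_of_mem_spNbrs (hirr : ∀ v, ¬ A v v) {c f x : V} (hx : x ∈ spNbrs A w c f) :
    x ≠ c :=
  fun h => hirr c (h ▸ hx.1)

theorem isSetwiseCover_self (hCF : C ⊆ F) : IsSetwiseCover A w C F F :=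
  ⟨subset_rfl, fun _ hc hcF => absurd (hCF hc) hcF⟩

theorem IsSetwiseCover.nonempty {F' : Set V} (hF' : IsSetwiseCover A w C F F')
    (hC : C.Nonempty) : F'.Nonempty := by
  obtain ⟨c, hc⟩ := hC
  by_cases hcF' : c ∈ F'
  · exact ⟨c, hcF'⟩
  · obtain ⟨f, hf, -⟩ := hF'.2 c hc hcF'
    exact ⟨f, hf⟩

theorem exists_isSetwiseCover_ncard_eq_sInf (hCF : C ⊆ F) :
    ∃ F', IsSetwiseCover A w C F F' ∧
      F'.ncard = sInf {n | ∃ F', IsSetwiseCover A w C F F' ∧ F'.ncard = n} := by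
  obtain ⟨F', hF', hcard⟩ := Nat.sInf_mem (⟨F.ncard, F, isSetwiseCover_self hCF, rfl⟩ :
    {n | ∃ F', IsSetwiseCover A w C F F' ∧ F'.ncard = n}.Nonempty)
  exact ⟨F', hF', hcard⟩

theorem IsSetwiseCover.exists_mem_favoid {F' : Set V} (hF' : IsSetwiseCover A w C F F')
    {c x : V} (hc : c ∈ C) (hxc : x ≠ c) : ∃ f ∈ F', f ∈ Favoid A w F x c := by
  by_cases hcF' : c ∈ F'
  · exact ⟨c, hcF', Or.inl rfl⟩
  obtain ⟨f₁, hf₁, f₂, hf₂, -, hf₁c, hf₂c, hdisj⟩ := hF'.2 c hc hcF'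
  by_cases havoid : ∀ p, IsShortestDiPath A w c f₁ p → x ∉ p
  · exact ⟨f₁, hf₁, Or.inr ⟨hF'.1 hf₁, hf₁c, havoid⟩⟩
  simp only [not_forall, not_not] at havoid
  obtain ⟨p₁, hp₁, hxp₁⟩ := havoid
  exact ⟨f₂, hf₂, Or.inr ⟨hF'.1 hf₂, hf₂c,
    fun p hp hxp => hxc (hdisj p₁ p hp₁ hp x hxp₁ hxp)⟩⟩

theorem IsSetwiseCover.fractionallyHittable_favoid [Finite V] {F' : Set V}
    (hF' : IsSetwiseCover A w C F F') {x : V → V} {C' : Set V} (hC' : C' ⊆ C)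
    (hx : ∀ c ∈ C', x c ≠ c) :
    FractionallyHittable F (fun c => Favoid A w F (x c) c) C' (1 / F'.ncard) := by
  intro U hU hUne
  have hF'ne : F'.Nonempty := hF'.nonempty (hUne.mono (hU.trans hC'))
  obtain ⟨g, hg, hcount⟩ := Set.exists_mem_ncard_mul_le_ncard_mul
    (fun c => Favoid A w F (x c) c) (Set.toFinite F') hF'ne (Set.toFinite U) (s := 1)
    fun c hc => by
      obtain ⟨f, hf, hfc⟩ := hF'.exists_mem_favoid (hC' (hU hc)) (hx c (hU hc))
      exact (Set.ncard_pos (Set.toFinite _)).mpr ⟨f, hf, hfc⟩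
  refine ⟨g, hF'.1 hg, ?_⟩
  have hF'pos : (0 : ℝ) < F'.ncard := by
    exact_mod_cast (Set.ncard_pos (Set.toFinite F')).mpr hF'ne
  rw [one_div, inv_mul_le_iff₀ hF'pos]
  exact_mod_cast (mul_one U.ncard).symm.trans_le hcount

end Facility

theorem two_div_three_le_exp_neg : (2 / 3 : ℝ) ≤ Real.exp (-(100 / 247)) := by
  have hpow : Real.exp (100 / 247) ^ 247 ≤ (3 / 2 : ℝ) ^ 247 :=
    calc Real.exp (100 / 247) ^ 247 = Real.exp 1 ^ 100 := by
          rw [← Real.exp_nat_mul, ← Real.exp_nat_mul]; norm_num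
      _ ≤ 2.7182818286 ^ 100 := by gcongr; exact Real.exp_one_lt_d9.le
      _ ≤ (3 / 2 : ℝ) ^ 247 := by norm_num
  rw [Real.exp_neg, show (2 / 3 : ℝ) = (3 / 2)⁻¹ by norm_num]
  exact inv_anti₀ (Real.exp_pos _) (le_of_pow_le_pow_left₀ (by norm_num) (by norm_num) hpow)

theorem dhs_performance_bound_large_t_general
    {V : Type*} [Fintype V] (A : V → V → Prop) (w : V → V → ℝ)
    (hirr : ∀ v, ¬ A v v)
    (C F : Set V) (hCF : C ⊆ F)
    (t : ℕ)
    (ht3 : (F.ncard : ℝ) ≤ 3 * (t : ℝ))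
    (hCt : (tGoodCustomers A w C F t).Nonempty)
    (X : Set V)
    (hX : IsGreedyHittingSet F (Sgood A w F) (tGoodCustomers A w C F t) X)
    (C'' : Set V)
    (hC'' : C'' = {c ∈ tGoodCustomers A w C F t | ¬ CoveredBy A w X c})
    (fc xc : V → V)
    (hxc : ∀ c ∈ C'', spNbrs A w c (fc c) = {xc c})
    (Y : Set V)
    (hY : IsGreedyHittingSet F (fun c => Favoid A w F (xc c) c) C'' Y) :
    (X.ncard : ℝ) ≤ 1 + 2.47 * Real.log ((tGoodCustomers A w C F t).ncard : ℝ) ∧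
    ((X ∪ Y).ncard : ℝ) ≤
      (3.47 * Real.log ((tGoodCustomers A w C F t).ncard : ℝ) + 2) *
        ((sInf {n | ∃ F', IsSetwiseCover A w (tGoodCustomers A w C F t) F F' ∧
            F'.ncard = n} : ℕ) : ℝ) := by
  set Ct := tGoodCustomers A w C F t
  have hlog : 0 ≤ Real.log Ct.ncard := Real.log_natCast_nonneg _
  have hXle : (X.ncard : ℝ) ≤ 1 + 2.47 * Real.log Ct.ncard := by
    have := hX.ncard_le (δ := 1 / 3) (c := 100 / 247) (Set.toFinite _) (by norm_num)
      (by norm_num; exact two_div_three_le_exp_neg) (fractionallyHittable_sgood hCF ht3)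
    linarith
  refine ⟨hXle, ?_⟩
  obtain ⟨F', hF', hF'card⟩ := exists_isSetwiseCover_ncard_eq_sInf (w := w)
    fun c (hc : c ∈ Ct) => hCF hc.1
  rw [← hF'card]
  have hK : (1 : ℝ) ≤ F'.ncard := by
    exact_mod_cast (Set.ncard_pos (Set.toFinite _)).mpr (hF'.nonempty hCt)
  have hC''Ct : C'' ⊆ Ct := hC'' ▸ Set.sep_subset _ _
  have hxc_ne : ∀ c ∈ C'', xc c ≠ c := fun c hc =>
    ne_of_mem_spNbrs hirr (by rw [hxc c hc]; exact Set.mem_singleton (xc c))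
  have hYle : (Y.ncard : ℝ) ≤ 1 + F'.ncard * Real.log Ct.ncard := by
    have := hY.ncard_le (δ := 1 / F'.ncard) (c := 1 / F'.ncard) (Set.toFinite _)
      (by positivity) (by linarith [Real.add_one_le_exp (-(1 / F'.ncard : ℝ))])
      (hF'.fractionallyHittable_favoid hC''Ct hxc_ne)
    have hlogC'' : Real.log C''.ncard ≤ Real.log Ct.ncard := by
      rcases Nat.eq_zero_or_pos C''.ncard with h0 | hpos
      · rwa [h0, Nat.cast_zero, Real.log_zero]
      · exact Real.log_le_log (by exact_mod_cast hpos)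
          (by exact_mod_cast Set.ncard_le_ncard hC''Ct)
    rw [one_div, div_inv_eq_mul] at this
    nlinarith
  have hunion : ((X ∪ Y).ncard : ℝ) ≤ X.ncard + Y.ncard := by
    exact_mod_cast Set.ncard_union_le X Y
  nlinarith

/-- Let `1 ≤ t ≤ |F|` with `t ≥ |F|/3`, suppose there is at least
one `t`-good customer, and let `X` and `Y` be the greedy hitting sets generated by one
run of `DHS_t`. Then `|X| ≤ 1 + 2.47·ln|C_t|` and
`|X ∪ Y| ≤ (3.47·ln|C_t| + 2)·OPT_t`, where `OPT_t` is the minimum size of a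
setwise-disjoint cover of the set `C_t` of `t`-good customers. -/
theorem dhs_performance_bound_large_t
    {V : Type*} [Fintype V] (A : V → V → Prop) (w : V → V → ℝ)
    (hw : ∀ x y, A x y → 0 < w x y) (hirr : ∀ v, ¬ A v v)
    (hconn : ∀ u v : V, ∃ p, IsDiPath A u v p)
    (C F : Set V) (hCF : C ⊆ F)
    (t : ℕ) (ht : 1 ≤ t) (htF : t ≤ F.ncard)
    (ht3 : (F.ncard : ℝ) ≤ 3 * (t : ℝ))
    (hCt : (tGoodCustomers A w C F t).Nonempty)
    (X : Set V)
    (hX : IsGreedyHittingSet F (Sgood A w F) (tGoodCustomers A w C F t) X)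
    (C'' : Set V)
    (hC'' : C'' = {c ∈ tGoodCustomers A w C F t | ¬ CoveredBy A w X c})
    (fc xc : V → V)
    (hfc : ∀ c ∈ C'', fc c ∈ X ∩ Sgood A w F c)
    (hxc : ∀ c ∈ C'', spNbrs A w c (fc c) = {xc c})
    (Y : Set V)
    (hY : IsGreedyHittingSet F (fun c => Favoid A w F (xc c) c) C'' Y) :
    (X.ncard : ℝ) ≤ 1 + 2.47 * Real.log ((tGoodCustomers A w C F t).ncard : ℝ) ∧
    ((X ∪ Y).ncard : ℝ) ≤
      (3.47 * Real.log ((tGoodCustomers A w C F t).ncard : ℝ) + 2) *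
        ((sInf {n | ∃ F', IsSetwiseCover A w (tGoodCustomers A w C F t) F F' ∧
            F'.ncard = n} : ℕ) : ℝ) :=
  dhs_performance_bound_large_t_general A w hirr C F hCF t ht3 hCt X hX C'' hC'' fc xc hxc Y hY
end
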